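/- arXiv:math/0409443 — 8 statements merged into one kernel-verified Lean document; each statement's English description precedes it below -/
import Mathlib

section
/- Let A be a commutative ring and T ⊆ A a semiring (i.e., 0, 1 ∈ T, T + T ⊆ T, T·T ⊆ T). Then the set O_T(A) := {a ∈ A | N + a ∈ T and N - a ∈ T for some natural number N} is a subring of A. -/
theorem bounded_elements_subring (A : Type*) [CommRing A] (T : Set A)
    (h0 : (0 : A) ∈ T) (h1 : (1 : A) ∈ T)
    (hadd : ∀ x ∈ T, ∀ y ∈ T, x + y ∈ T)
    (hmul : ∀ x ∈ T, ∀ y ∈ T, x * y ∈ T) :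
    ∃ S : Subring A, (S : Set A) = {a : A | ∃ N : ℕ, (N : A) + a ∈ T ∧ (N : A) - a ∈ T} := by
  have hnat : ∀ n : ℕ, ((n : A) ∈ T) := by
    intro n
    induction n with
    | zero => simpa using h0
    | succ k ih => push_cast; exact hadd _ ih _ h1
  refine ⟨{ carrier := {a : A | ∃ N : ℕ, (N : A) + a ∈ T ∧ (N : A) - a ∈ T},
            zero_mem' := ⟨0, by simpa using h0⟩,
            one_mem' := ⟨1, by simpa using hadd _ h1 _ h1, by simpa using h0⟩,
            add_mem' := ?add, neg_mem' := ?neg, mul_mem' := ?mul }, rfl⟩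
  case add =>
    rintro x y ⟨N, hN1, hN2⟩ ⟨M, hM1, hM2⟩
    refine ⟨N + M, ?_, ?_⟩
    · have h := hadd _ hN1 _ hM1
      push_cast; convert h using 1; ring
    · have h := hadd _ hN2 _ hM2
      push_cast; convert h using 1; ring
  case neg =>
    rintro x ⟨N, hN1, hN2⟩
    exact ⟨N, by simpa [sub_eq_add_neg] using hN2, by simpa [sub_eq_add_neg] using hN1⟩
  case mul =>
    rintro x y ⟨N, hN1, hN2⟩ ⟨M, hM1, hM2⟩
    refine ⟨3 * N * M, ?_, ?_⟩
    · have h := hadd _ (hadd _ (hmul _ hN1 _ hM1) _ (hmul _ (hnat N) _ hM2)) _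
        (hmul _ (hnat M) _ hN2)
      push_cast; convert h using 1; ring
    · have h := hadd _ (hadd _ (hmul _ hN1 _ hM2) _ (hmul _ (hnat N) _ hM1)) _
        (hmul _ (hnat M) _ hN2)
      push_cast; convert h using 1; ring
end

section
/- Let f ∈ ℝ[X₁,…,Xₙ] be homogeneous of degree d, and let U be a closed subset of the standard simplex Δ = {x ∈ [0,∞)ⁿ | x₁ + ⋯ + xₙ = 1} such that f > 0 on U. Then there exists k₀ ∈ ℕ such that for all k ≥ k₀ and all α ∈ ℕⁿ with k + d ≠ 0 and α/(k+d) ∈ U, the coefficient of X^α in (X₁ + ⋯ + Xₙ)^k · f is positive. -/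
open MvPolynomial Finset Nat

lemma abs_prod_sub_prod_le {ι : Type*} (s : Finset ι) (a b : ι → ℝ)
    (ha : ∀ i ∈ s, |a i| ≤ 1) (hb : ∀ i ∈ s, |b i| ≤ 1) :
    |∏ i ∈ s, a i - ∏ i ∈ s, b i| ≤ ∑ i ∈ s, |a i - b i| := by
  induction s using Finset.cons_induction with
  | empty => simp
  | cons c s hc ih =>
    rw [Finset.prod_cons, Finset.prod_cons, Finset.sum_cons]
    have key : a c * ∏ i ∈ s, a i - b c * ∏ i ∈ s, b i
        = a c * (∏ i ∈ s, a i - ∏ i ∈ s, b i) + (a c - b c) * ∏ i ∈ s, b i := by ring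
    rw [key]
    have h1 : |a c * (∏ i ∈ s, a i - ∏ i ∈ s, b i)| ≤ ∑ i ∈ s, |a i - b i| := by
      rw [abs_mul]
      calc |a c| * |∏ i ∈ s, a i - ∏ i ∈ s, b i|
          ≤ 1 * (∑ i ∈ s, |a i - b i|) := by
            apply mul_le_mul (ha c (mem_cons_self c s))
              (ih (fun i hi => ha i (mem_cons_of_mem hi)) (fun i hi => hb i (mem_cons_of_mem hi)))
              (abs_nonneg _) zero_le_one
        _ = ∑ i ∈ s, |a i - b i| := one_mul _
    have h2 : |(a c - b c) * ∏ i ∈ s, b i| ≤ |a c - b c| := by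
      rw [abs_mul]
      have : |∏ i ∈ s, b i| ≤ 1 := by
        rw [abs_prod]
        exact Finset.prod_le_one (fun i _ => abs_nonneg _) (fun i hi => hb i (mem_cons_of_mem hi))
      calc |a c - b c| * |∏ i ∈ s, b i| ≤ |a c - b c| * 1 :=
            mul_le_mul_of_nonneg_left this (abs_nonneg _)
        _ = _ := mul_one _
    calc |a c * (∏ i ∈ s, a i - ∏ i ∈ s, b i) + (a c - b c) * ∏ i ∈ s, b i|
        ≤ |a c * (∏ i ∈ s, a i - ∏ i ∈ s, b i)| + |(a c - b c) * ∏ i ∈ s, b i| := abs_add_le _ _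
      _ ≤ ∑ i ∈ s, |a i - b i| + |a c - b c| := add_le_add h1 h2
      _ = |a c - b c| + ∑ i ∈ s, |a i - b i| := by ring

lemma cast_descFactorial_prod (a b : ℕ) :
    ((a.descFactorial b : ℕ) : ℝ) = ∏ j ∈ range b, ((a : ℝ) - j) := by
  rcases le_or_gt b a with h | h
  · rw [Nat.descFactorial_eq_prod_range, Nat.cast_prod]
    refine Finset.prod_congr rfl fun j hj => ?_
    rw [Nat.cast_sub ((mem_range.mp hj).le.trans h)]
  · rw [Nat.descFactorial_eq_zero_iff_lt.mpr h, Nat.cast_zero]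
    symm
    apply Finset.prod_eq_zero (mem_range.mpr h : a ∈ range b)
    simp

lemma coeff_sum_X_pow (n k : ℕ) (β : Fin n →₀ ℕ) :
    ((∑ i, X i : MvPolynomial (Fin n) ℝ)^k).coeff β
      = if ∑ i, β i = k then (Nat.multinomial Finset.univ β : ℝ) else 0 := by
  rw [Finset.sum_pow_eq_sum_piAntidiag, MvPolynomial.coeff_sum]
  have hmono : ∀ m : Fin n → ℕ, (∏ i, (X i : MvPolynomial (Fin n) ℝ) ^ m i)
      = monomial (Finsupp.equivFunOnFinite.symm m) 1 := by
    intro m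
    rw [← prod_X_pow_eq_monomial]
    refine (Finset.prod_subset (subset_univ _) fun i _ hi => ?_).symm
    have h0 : m i = 0 := by simpa using Finsupp.notMem_support_iff.mp hi
    rw [h0, pow_zero]
  simp only [hmono, ← map_natCast (MvPolynomial.C : ℝ →+* MvPolynomial (Fin n) ℝ),
    coeff_C_mul, coeff_monomial, mul_ite, mul_one, mul_zero]
  simp_rw [Equiv.symm_apply_eq]
  rw [Finset.sum_ite_eq' (piAntidiag univ k)]
  have hmem : (Finsupp.equivFunOnFinite β ∈ piAntidiag (univ : Finset (Fin n)) k) ↔ ∑ i, β i = k := by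
    simp [mem_piAntidiag, Finsupp.equivFunOnFinite]
  by_cases h : ∑ i, β i = k
  · rw [if_pos (hmem.mpr h), if_pos h]
    rfl
  · rw [if_neg (fun hc => h (hmem.mp hc)), if_neg h]


lemma key_identity (n k d : ℕ) (f : MvPolynomial (Fin n) ℝ) (hf : f.IsHomogeneous d)
    (α : Fin n →₀ ℕ) (hα : ∑ i, α i = k + d) :
    (∏ i, ((α i)! : ℝ)) * ((∑ i, X i : MvPolynomial (Fin n) ℝ)^k * f).coeff α
    = (k ! : ℝ) * ∑ γ ∈ f.support, f.coeff γ * ∏ i, ((α i).descFactorial (γ i) : ℝ) := by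
  conv_lhs => rw [f.as_sum]
  rw [Finset.mul_sum, MvPolynomial.coeff_sum, Finset.mul_sum, Finset.mul_sum]
  refine Finset.sum_congr rfl fun γ hγ => ?_
  have hγd : ∑ i, γ i = d := by
    have h1 : Finsupp.degree γ = d := by
      rw [Finsupp.degree_eq_weight_one]; exact hf (mem_support_iff.mp hγ)
    rw [← h1, Finsupp.degree]
    exact (Finset.sum_subset (subset_univ _)
      fun i _ hi => Finsupp.notMem_support_iff.mp hi).symm
  rw [coeff_mul_monomial']
  by_cases hle : γ ≤ α
  · have hle' : ∀ i, γ i ≤ α i := Finsupp.le_def.mp hle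
    rw [if_pos hle, coeff_sum_X_pow]
    have hsub : ∑ i, (α - γ) i = k := by
      have h2 : ∀ i ∈ (univ : Finset (Fin n)), (α - γ) i + γ i = α i := fun i _ => by
        rw [Finsupp.tsub_apply]; exact Nat.sub_add_cancel (hle' i)
      have h3 := Finset.sum_congr rfl h2
      rw [Finset.sum_add_distrib] at h3
      have h5 : univ.sum ⇑α = k + d := hα
      omega
    rw [if_pos hsub]
    have hnat : (∏ i, (α i)!) * Nat.multinomial univ (α - γ)
        = k ! * ∏ i, (α i).descFactorial (γ i) := by
      have h3 : ∀ i ∈ (univ : Finset (Fin n)),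
          (α i)! = (α i).descFactorial (γ i) * ((α - γ) i)! := fun i _ => by
        rw [Finsupp.tsub_apply, mul_comm, Nat.factorial_mul_descFactorial (hle' i)]
      have h4 : (∏ i, ((α - γ) i)!) * Nat.multinomial univ (α - γ) = k ! := by
        rw [Nat.multinomial_spec]
        congr 1
      calc (∏ i, (α i)!) * Nat.multinomial univ (α - γ)
          = ((∏ i, (α i).descFactorial (γ i)) * ∏ i, ((α - γ) i)!)
              * Nat.multinomial univ (α - γ) := by
            rw [Finset.prod_congr rfl h3, Finset.prod_mul_distrib]
        _ = (∏ i, (α i).descFactorial (γ i))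
              * ((∏ i, ((α - γ) i)!) * Nat.multinomial univ (α - γ)) := by ring
        _ = (∏ i, (α i).descFactorial (γ i)) * k ! := by rw [h4]
        _ = k ! * ∏ i, (α i).descFactorial (γ i) := mul_comm _ _
    have hcast : ((∏ i, (α i)! : ℕ) : ℝ) * ((Nat.multinomial univ (α - γ) : ℕ) : ℝ)
        = ((k ! : ℕ) : ℝ) * ((∏ i, (α i).descFactorial (γ i) : ℕ) : ℝ) := by
      rw [← Nat.cast_mul, ← Nat.cast_mul, hnat]
    rw [Nat.cast_prod, Nat.cast_prod] at hcast
    calc (∏ i, ((α i)! : ℝ)) * (↑(Nat.multinomial univ (α - γ)) * coeff γ f)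
        = ((∏ i, ((α i)! : ℝ)) * ↑(Nat.multinomial univ (α - γ))) * coeff γ f := by ring
      _ = ((k ! : ℝ) * ∏ i, (((α i).descFactorial (γ i)) : ℝ)) * coeff γ f := by rw [hcast]
      _ = (k ! : ℝ) * (coeff γ f * ∏ i, (((α i).descFactorial (γ i)) : ℝ)) := by ring
  · rw [if_neg hle]
    obtain ⟨i, hi⟩ : ∃ i, α i < γ i := by
      by_contra h; push_neg at h; exact hle (Finsupp.le_def.mpr h)
    have h0 : (((α i).descFactorial (γ i) : ℕ) : ℝ) = 0 := by
      rw [Nat.descFactorial_eq_zero_iff_lt.mpr hi, Nat.cast_zero]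
    have hz : (∏ i, (((α i).descFactorial (γ i)) : ℝ)) = 0 :=
      Finset.prod_eq_zero (mem_univ i) h0
    rw [hz]
    simp

theorem local_polya (n : ℕ) (f : MvPolynomial (Fin n) ℝ) (d : ℕ)
    (hf : f.IsHomogeneous d)
    (U : Set (Fin n → ℝ)) (hUclosed : IsClosed U)
    (hUΔ : U ⊆ {x : Fin n → ℝ | (∀ i, 0 ≤ x i) ∧ ∑ i, x i = 1})
    (hpos : ∀ x ∈ U, 0 < eval x f) :
    ∃ k₀ : ℕ, ∀ k ≥ k₀, ∀ α : Fin n →₀ ℕ, k + d ≠ 0 →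
      (fun i => (α i : ℝ) / (k + d)) ∈ U →
      0 < ((∑ i, X i : MvPolynomial (Fin n) ℝ)^k * f).coeff α := by
  classical
  by_cases hUne : U.Nonempty
  swap
  · exact ⟨0, fun k _ α _ hx => absurd ⟨_, hx⟩ hUne⟩
  -- U is compact
  have hUb : Bornology.IsBounded U := by
    apply (Metric.isBounded_closedBall (x := (0 : Fin n → ℝ)) (r := 1)).subset
    intro y hyU
    obtain ⟨hy0, hy1⟩ := hUΔ hyU
    rw [Metric.mem_closedBall, dist_pi_le_iff zero_le_one]
    intro i
    simp only [Pi.zero_apply, Real.dist_0_eq_abs]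
    rw [abs_le]
    refine ⟨by linarith [hy0 i], ?_⟩
    calc y i ≤ ∑ j, y j := Finset.single_le_sum (fun j _ => hy0 j) (mem_univ i)
      _ = 1 := hy1
  have hUcomp : IsCompact U := Metric.isCompact_of_isClosed_isBounded hUclosed hUb
  obtain ⟨x₀, hx₀U, hminOn⟩ := hUcomp.exists_isMinOn hUne
    (MvPolynomial.continuous_eval (p := f)).continuousOn
  set ε := eval x₀ f with hε_def
  have hε : 0 < ε := hpos x₀ hx₀U
  set M := ∑ γ ∈ f.support, |f.coeff γ| with hM_def
  have hM0 : 0 ≤ M := Finset.sum_nonneg fun γ _ => abs_nonneg _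
  obtain ⟨k₀, hk₀⟩ := exists_nat_gt (M * (d : ℝ)^2 / ε)
  refine ⟨k₀, fun k hk α hN0 hxU => ?_⟩
  set N : ℕ := k + d with hN_def
  have hNpos : 0 < N := Nat.pos_of_ne_zero hN0
  have hNr : (0 : ℝ) < (N : ℝ) := by exact_mod_cast hNpos
  have hNcast : ((N : ℕ) : ℝ) = (k : ℝ) + d := by push_cast [hN_def]; ring
  have hxU' := hUΔ hxU
  simp only [Set.mem_setOf_eq] at hxU'
  obtain ⟨hx0, hx1⟩ := hxU'
  set x : Fin n → ℝ := fun i => (α i : ℝ) / ((k : ℝ) + (d : ℝ)) with hx_def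
  have hxN : ∀ i, x i = (α i : ℝ) / N := fun i => by rw [hx_def, hNcast]
  have hsumα : ∑ i, α i = N := by
    have h1 : ∑ i, x i = 1 := hx1
    rw [hx_def] at h1
    simp only [← Finset.sum_div] at h1
    rw [div_eq_one_iff_eq (by rw [← hNcast]; exact ne_of_gt hNr)] at h1
    have h2 : ((∑ i, α i : ℕ) : ℝ) = ((N : ℕ) : ℝ) := by
      push_cast
      rw [h1, ← hNcast]
    exact_mod_cast h2
  have hxle : ∀ i, x i ≤ 1 := by
    intro i
    calc x i ≤ ∑ j, x j := Finset.single_le_sum (fun j _ => hx0 j) (mem_univ i)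
      _ = 1 := hx1
  have hγd : ∀ γ ∈ f.support, ∑ i, γ i = d := by
    intro γ hγ
    have h1 : Finsupp.degree γ = d := by
      rw [Finsupp.degree_eq_weight_one]; exact hf (mem_support_iff.mp hγ)
    rw [← h1, Finsupp.degree]
    exact (Finset.sum_subset (subset_univ _)
      fun i _ hi => Finsupp.notMem_support_iff.mp hi).symm
  have hγle : ∀ γ ∈ f.support, ∀ i, γ i ≤ d := fun γ hγ i =>
    (Finset.single_le_sum (f := fun j => γ j) (fun j _ => Nat.zero_le _)
      (mem_univ i)).trans (le_of_eq (hγd γ hγ))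
  set T := ∑ γ ∈ f.support, f.coeff γ * ∏ i, ∏ j ∈ range (γ i), (x i - (j : ℝ)/N)
    with hT_def
  -- descFactorial products vs shifted products
  have hprod : ∀ γ ∈ f.support, (∏ i, (((α i).descFactorial (γ i)) : ℝ))
      = (N : ℝ)^d * ∏ i, ∏ j ∈ range (γ i), (x i - (j : ℝ)/N) := by
    intro γ hγ
    have hone : ∀ i, (((α i).descFactorial (γ i)) : ℝ)
        = (N : ℝ)^(γ i) * ∏ j ∈ range (γ i), (x i - (j : ℝ)/N) := by
      intro i
      rw [cast_descFactorial_prod,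
        show ((N : ℝ))^(γ i) = ∏ _j ∈ range (γ i), (N : ℝ) from by
          rw [Finset.prod_const, card_range], ← Finset.prod_mul_distrib]
      refine Finset.prod_congr rfl fun j hj => ?_
      have hNx : (N : ℝ) * x i = α i := by
        rw [hxN i, mul_div_cancel₀]
        exact ne_of_gt hNr
      rw [mul_sub, hNx, mul_div_cancel₀ _ (ne_of_gt hNr)]
    rw [Finset.prod_congr rfl (fun i _ => hone i), Finset.prod_mul_distrib,
      Finset.prod_pow_eq_pow_sum, hγd γ hγ]
  -- product bound
  have hbound : ∀ γ ∈ f.support,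
      |(∏ i, ∏ j ∈ range (γ i), (x i - (j : ℝ)/N)) - ∏ i, x i ^ γ i|
        ≤ (d : ℝ)^2 / N := by
    intro γ hγ
    set a : Fin n → ℝ := fun i => ∏ j ∈ range (γ i), (x i - (j : ℝ)/N) with ha_def
    set b : Fin n → ℝ := fun i => x i ^ γ i with hb_def
    have hjN : ∀ i, ∀ j ∈ range (γ i), (j : ℝ)/N ≤ 1 := by
      intro i j hj
      rw [div_le_one hNr]
      have : j < N := lt_of_lt_of_le (mem_range.mp hj)
        ((hγle γ hγ i).trans (Nat.le_add_left d k))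
      exact_mod_cast this.le
    have hjd : ∀ i, ∀ j ∈ range (γ i), (j : ℝ)/N ≤ (d : ℝ)/N := by
      intro i j hj
      gcongr
      exact_mod_cast ((mem_range.mp hj).le.trans (hγle γ hγ i))
    have hfac : ∀ i, ∀ j ∈ range (γ i), |x i - (j : ℝ)/N| ≤ 1 := by
      intro i j hj
      have h0j : (0 : ℝ) ≤ (j : ℝ)/N := by positivity
      rw [abs_le]
      constructor <;> [linarith [hx0 i, hjN i j hj]; linarith [hxle i]]
    have ha : ∀ i ∈ (univ : Finset (Fin n)), |a i| ≤ 1 := fun i _ => by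
      rw [ha_def]
      simp only
      rw [abs_prod]
      exact Finset.prod_le_one (fun j _ => abs_nonneg _) (hfac i)
    have hb : ∀ i ∈ (univ : Finset (Fin n)), |b i| ≤ 1 := fun i _ => by
      rw [hb_def]
      simp only
      rw [abs_pow]
      exact pow_le_one₀ (abs_nonneg _) (abs_le.mpr ⟨by linarith [hx0 i], hxle i⟩)
    have inner : ∀ i, |a i - b i| ≤ (γ i : ℝ) * ((d : ℝ)/N) := by
      intro i
      have hb' : b i = ∏ _j ∈ range (γ i), x i := by
        rw [hb_def]; simp only; rw [Finset.prod_const, card_range]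
      rw [hb']
      calc |a i - ∏ _j ∈ range (γ i), x i|
          ≤ ∑ j ∈ range (γ i), |(x i - (j : ℝ)/N) - x i| :=
            abs_prod_sub_prod_le _ _ _ (hfac i)
              (fun j _ => abs_le.mpr ⟨by linarith [hx0 i], hxle i⟩)
        _ ≤ ∑ j ∈ range (γ i), (d : ℝ)/N := by
            refine Finset.sum_le_sum fun j hj => ?_
            rw [sub_sub_cancel_left, abs_neg, abs_of_nonneg (by positivity)]
            exact hjd i j hj
        _ = (γ i : ℝ) * ((d : ℝ)/N) := by rw [Finset.sum_const, card_range]; ring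
    calc |(∏ i, a i) - ∏ i, b i| ≤ ∑ i, |a i - b i| :=
          abs_prod_sub_prod_le univ a b ha hb
      _ ≤ ∑ i, (γ i : ℝ) * ((d : ℝ)/N) := Finset.sum_le_sum fun i _ => inner i
      _ = (∑ i, (γ i : ℝ)) * ((d : ℝ)/N) := by rw [← Finset.sum_mul]
      _ = (d : ℝ) * ((d : ℝ)/N) := by
          congr 1
          rw [← Nat.cast_sum]
          exact_mod_cast congrArg (Nat.cast : ℕ → ℝ) (hγd γ hγ)
      _ = (d : ℝ)^2 / N := by ring
  -- T close to eval x f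
  have hTclose : |T - eval x f| ≤ M * ((d : ℝ)^2 / N) := by
    rw [eval_eq', hT_def, ← Finset.sum_sub_distrib]
    calc |∑ γ ∈ f.support, (f.coeff γ * ∏ i, ∏ j ∈ range (γ i), (x i - (j : ℝ)/N)
            - f.coeff γ * ∏ i, x i ^ γ i)|
        ≤ ∑ γ ∈ f.support, |f.coeff γ * ∏ i, ∏ j ∈ range (γ i), (x i - (j : ℝ)/N)
            - f.coeff γ * ∏ i, x i ^ γ i| := Finset.abs_sum_le_sum_abs _ _
      _ ≤ ∑ γ ∈ f.support, |f.coeff γ| * ((d : ℝ)^2 / N) := by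
          refine Finset.sum_le_sum fun γ hγ => ?_
          rw [← mul_sub, abs_mul]
          exact mul_le_mul_of_nonneg_left (hbound γ hγ) (abs_nonneg _)
      _ = M * ((d : ℝ)^2 / N) := by rw [hM_def, Finset.sum_mul]
  have hεx : ε ≤ eval x f := hminOn hxU
  have hMd : M * ((d : ℝ)^2 / N) < ε := by
    rw [div_lt_iff₀ hε] at hk₀
    have hk₀N : (k₀ : ℝ) ≤ (N : ℝ) := by
      exact_mod_cast le_trans hk (Nat.le_add_right k d)
    rw [← mul_div_assoc, div_lt_iff₀ hNr]
    nlinarith [hε, hNr]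
  have hT : 0 < T := by
    have h1 : |T - eval x f| < ε := lt_of_le_of_lt hTclose hMd
    rw [abs_lt] at h1
    linarith [h1.1]
  have hkey := key_identity n k d f hf α (by rw [hsumα])
  have hS : (∑ γ ∈ f.support, f.coeff γ * ∏ i, (((α i).descFactorial (γ i)) : ℝ))
      = (N : ℝ)^d * T := by
    rw [hT_def, Finset.mul_sum]
    exact Finset.sum_congr rfl fun γ hγ => by rw [hprod γ hγ]; ring
  rw [hS] at hkey
  have hP : 0 < ∏ i, ((α i)! : ℝ) :=
    Finset.prod_pos fun i _ => by exact_mod_cast Nat.factorial_pos (α i)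
  have hRHS : (0 : ℝ) < (k ! : ℝ) * ((N : ℝ)^d * T) := by
    apply mul_pos (by exact_mod_cast Nat.factorial_pos k)
    exact mul_pos (pow_pos hNr d) hT
  nlinarith [hkey, hP, hRHS]
end

section
/- (Pólya's theorem) Let f ∈ ℝ[X₁,…,Xₙ] be homogeneous with f > 0 on the simplex Δ = {x ∈ [0,∞)ⁿ | x₁+⋯+xₙ = 1}. Then there exists k ∈ ℕ such that all coefficients of (X₁+⋯+Xₙ)^k · f are nonnegative. -/
open Finset MvPolynomial
open scoped Nat

/-!
For a multi-index `β` with `|β| = N = d + k`, the multinomial theorem gives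
`β! · coeff_β ((∑ Xᵢ)^k f) = k! · ∑_α f_α ∏ᵢ (βᵢ)_(αᵢ)`, with falling factorials `(b)_a`.
Since `(b)_a / N^a` differs from `(b/N)^a` by at most `a²/N`, the right-hand sum divided by `N^d`
is within `(∑_α |f_α|) d² / N` of `f(β/N)`. The point `β/N` lies on the simplex, where
`f ≥ ε > 0` by compactness, so every coefficient is nonnegative once `N ≥ (∑_α |f_α|) d² / ε`.
-/

theorem norm_prod_sub_prod_le_sum_norm_sub {ι R : Type*} [NormedCommRing R] [NormOneClass R]
    (s : Finset ι) {a b : ι → R} (ha : ∀ i ∈ s, ‖a i‖ ≤ 1) (hb : ∀ i ∈ s, ‖b i‖ ≤ 1) :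
    ‖∏ i ∈ s, a i - ∏ i ∈ s, b i‖ ≤ ∑ i ∈ s, ‖a i - b i‖ := by
  induction s using cons_induction with
  | empty => simp
  | cons j s _ ih =>
    simp only [forall_mem_cons] at ha hb
    have hbs : ‖∏ i ∈ s, b i‖ ≤ 1 :=
      (Finset.norm_prod_le s b).trans (prod_le_one (fun _ _ => norm_nonneg _) hb.2)
    rw [prod_cons, prod_cons, sum_cons]
    calc ‖a j * ∏ i ∈ s, a i - b j * ∏ i ∈ s, b i‖
        = ‖a j * (∏ i ∈ s, a i - ∏ i ∈ s, b i) + (a j - b j) * ∏ i ∈ s, b i‖ := by ring_nf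
      _ ≤ ‖a j‖ * ‖∏ i ∈ s, a i - ∏ i ∈ s, b i‖ + ‖a j - b j‖ * ‖∏ i ∈ s, b i‖ :=
          (norm_add_le _ _).trans (add_le_add (norm_mul_le _ _) (norm_mul_le _ _))
      _ ≤ 1 * ∑ i ∈ s, ‖a i - b i‖ + ‖a j - b j‖ * 1 := by
          gcongr
          exacts [ha.1, ih ha.2 hb.2]
      _ = ‖a j - b j‖ + ∑ i ∈ s, ‖a i - b i‖ := by ring

theorem descFactorial_div_pow_eq_prod {b a N : ℕ} :
    (b.descFactorial a : ℝ) / (N : ℝ) ^ a = ∏ j ∈ range a, (((b : ℝ) - j) / N) := by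
  rw [← descPochhammer_eval_eq_descFactorial, descPochhammer_eval_eq_prod_range,
    prod_div_distrib, prod_const, card_range]

theorem abs_descFactorial_div_pow_sub_div_pow_le {N b a : ℕ} (hb : b ≤ N) (ha : a ≤ N) :
    |(b.descFactorial a : ℝ) / (N : ℝ) ^ a - ((b : ℝ) / N) ^ a| ≤ a ^ 2 / N := by
  have hb' : (b : ℝ) ≤ N := by exact_mod_cast hb
  have hfactor : ∀ j ∈ range a, |((b : ℝ) - j) / N| ≤ 1 := by
    intro j hj
    have hj' : (j : ℝ) ≤ N := by exact_mod_cast (mem_range.mp hj).le.trans ha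
    rw [abs_div, Nat.abs_cast]
    refine div_le_one_of_le₀ ?_ (Nat.cast_nonneg _)
    exact abs_sub_le_of_nonneg_of_le (Nat.cast_nonneg _) hb' (Nat.cast_nonneg _) hj'
  have hratio : ∀ j ∈ range a, |(b : ℝ) / N| ≤ 1 := fun _ _ => by
    rw [abs_div, Nat.abs_cast, Nat.abs_cast]; exact div_le_one_of_le₀ hb' (Nat.cast_nonneg _)
  have hpow : ((b : ℝ) / N) ^ a = ∏ _j ∈ range a, (b : ℝ) / N := by rw [prod_const, card_range]
  rw [descFactorial_div_pow_eq_prod, hpow]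
  simp only [← Real.norm_eq_abs] at hfactor hratio ⊢
  calc ‖∏ j ∈ range a, ((b : ℝ) - j) / N - ∏ _j ∈ range a, (b : ℝ) / N‖
      ≤ ∑ j ∈ range a, ‖((b : ℝ) - j) / N - b / N‖ :=
        norm_prod_sub_prod_le_sum_norm_sub _ hfactor hratio
    _ ≤ ∑ _j ∈ range a, (a : ℝ) / N := by
        refine sum_le_sum fun j hj => ?_
        rw [Real.norm_eq_abs, ← sub_div, sub_sub_cancel_left, abs_div, abs_neg, Nat.abs_cast,
          Nat.abs_cast]
        gcongr
        exact_mod_cast (mem_range.mp hj).le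
    _ = a ^ 2 / N := by rw [sum_const, card_range, nsmul_eq_mul]; ring

theorem abs_prod_descFactorial_div_sub_prod_div_pow_le {ι : Type*} (s : Finset ι) {N : ℕ}
    {a b : ι → ℕ} (hb : ∀ i ∈ s, b i ≤ N) (ha : ∑ i ∈ s, a i ≤ N) :
    |(∏ i ∈ s, (b i).descFactorial (a i) : ℝ) / (N : ℝ) ^ (∑ i ∈ s, a i) -
        ∏ i ∈ s, ((b i : ℝ) / N) ^ a i| ≤ (∑ i ∈ s, a i : ℝ) ^ 2 / N := by
  have ha_le : ∀ i ∈ s, a i ≤ N := fun i hi => (single_le_sum (by simp) hi).trans ha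
  have hdesc : ∀ i ∈ s, ‖((b i).descFactorial (a i) : ℝ) / (N : ℝ) ^ a i‖ ≤ 1 := by
    intro i hi
    rw [Real.norm_eq_abs, abs_of_nonneg (by positivity)]
    refine div_le_one_of_le₀ ?_ (by positivity)
    exact_mod_cast (Nat.descFactorial_le_pow _ _).trans (Nat.pow_le_pow_left (hb i hi) _)
  have hpow : ∀ i ∈ s, ‖((b i : ℝ) / N) ^ a i‖ ≤ 1 := by
    intro i hi
    rw [Real.norm_eq_abs, abs_of_nonneg (by positivity)]
    exact pow_le_one₀ (by positivity)
      (div_le_one_of_le₀ (by exact_mod_cast hb i hi) (by positivity))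
  rw [← prod_pow_eq_pow_sum, ← prod_div_distrib, ← Real.norm_eq_abs]
  calc _ ≤ ∑ i ∈ s, ‖((b i).descFactorial (a i) : ℝ) / (N : ℝ) ^ a i - ((b i : ℝ) / N) ^ a i‖ :=
        norm_prod_sub_prod_le_sum_norm_sub s hdesc hpow
    _ ≤ ∑ i ∈ s, (a i : ℝ) ^ 2 / N :=
        sum_le_sum fun i hi => abs_descFactorial_div_pow_sub_div_pow_le (hb i hi) (ha_le i hi)
    _ ≤ (∑ i ∈ s, a i : ℝ) ^ 2 / N := by
        rw [← sum_div]
        gcongr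
        exact sum_sq_le_sq_sum_of_nonneg fun i _ => Nat.cast_nonneg _

variable {σ : Type*} [Fintype σ]

theorem prod_factorial_mul_descFactorial {α β : σ →₀ ℕ} (h : α ≤ β) :
    (∏ i, (β i)!) * (β - α).multinomial = (β - α).degree ! * ∏ i, (β i).descFactorial (α i) := by
  have hfac : ∀ i, (β i)! = ((β - α) i)! * (β i).descFactorial (α i) := fun i => by
    rw [Finsupp.tsub_apply, Nat.factorial_mul_descFactorial (h i)]
  rw [prod_congr rfl fun i _ => hfac i, prod_mul_distrib, mul_right_comm,
    Finsupp.multinomial_eq_of_support_subset (subset_univ _), Nat.multinomial_spec,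
    Finsupp.degree_eq_sum]

theorem prod_factorial_mul_coeff_sum_X_pow_mul_monomial {R : Type*} [CommSemiring R]
    {α β : σ →₀ ℕ} {k : ℕ} (c : R) (h : β.degree = α.degree + k) :
    (∏ i, ((β i)! : R)) * coeff β ((∑ i, X i) ^ k * monomial α c) =
      k ! * (c * ∏ i, ((β i).descFactorial (α i) : R)) := by
  rw [coeff_mul_monomial', coeff_sum_X_pow_of_fintype]
  by_cases hαβ : α ≤ β
  · have hdeg : (β - α).degree = k := by
      rw [← add_right_cancel_iff (a := α.degree), ← map_add, tsub_add_cancel_of_le hαβ, h,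
        add_comm]
    have hsum : (β - α).sum (fun _ m => m) = k := hdeg
    rw [if_pos hαβ, if_pos hsum, ← hdeg]
    have := congrArg (Nat.cast (R := R)) (prod_factorial_mul_descFactorial hαβ)
    push_cast at this
    calc (∏ i, ((β i)! : R)) * ((β - α).multinomial * c)
        = ((∏ i, ((β i)! : R)) * (β - α).multinomial) * c := by ring
      _ = _ := by rw [this]; ring
  · obtain ⟨i, hi⟩ : ∃ i, β i < α i := by simpa [Finsupp.le_def] using hαβ
    have hzero : ∏ j, ((β j).descFactorial (α j) : R) = 0 :=
      prod_eq_zero (mem_univ i) (by rw [Nat.descFactorial_of_lt hi, Nat.cast_zero])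
    rw [if_neg hαβ, hzero, mul_zero, mul_zero, mul_zero]

def fallingEval {R : Type*} [CommSemiring R] (β : σ →₀ ℕ) (f : MvPolynomial σ R) : R :=
  ∑ α ∈ f.support, f.coeff α * ∏ i, ((β i).descFactorial (α i) : R)

theorem prod_factorial_mul_coeff_sum_X_pow_mul {R : Type*} [CommSemiring R]
    {f : MvPolynomial σ R} {d k : ℕ} (hf : f.IsHomogeneous d) {β : σ →₀ ℕ}
    (hβ : β.degree = d + k) :
    (∏ i, ((β i)! : R)) * coeff β ((∑ i, X i) ^ k * f) = k ! * fallingEval β f := by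
  conv_lhs => rw [f.as_sum]
  rw [mul_sum, coeff_sum, mul_sum, fallingEval, mul_sum]
  refine sum_congr rfl fun α hα => ?_
  refine prod_factorial_mul_coeff_sum_X_pow_mul_monomial _ ?_
  rw [hβ, ← hf (mem_support_iff.mp hα), Finsupp.degree_eq_weight_one]
  rfl

theorem div_degree_mem_stdSimplex {β : σ →₀ ℕ} (hβ : β ≠ 0) :
    (fun i => (β i : ℝ) / β.degree) ∈ stdSimplex ℝ σ := by
  have hN : (β.degree : ℝ) ≠ 0 := by simpa [Finsupp.degree_eq_zero_iff] using hβ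
  refine ⟨fun i => by positivity, ?_⟩
  rw [← sum_div, Finsupp.degree_eq_sum, Nat.cast_sum, div_self]
  simpa [Finsupp.degree_eq_sum] using hN

theorem abs_fallingEval_div_sub_eval_le {f : MvPolynomial σ ℝ} {d : ℕ} (hf : f.IsHomogeneous d)
    {β : σ →₀ ℕ} (hd : d ≤ β.degree) :
    |fallingEval β f / (β.degree : ℝ) ^ d - eval (fun i => (β i : ℝ) / β.degree) f| ≤
      (∑ α ∈ f.support, |f.coeff α|) * d ^ 2 / β.degree := by
  have hβ : ∀ i ∈ univ, β i ≤ β.degree := fun i hi => by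
    rw [Finsupp.degree_eq_sum]; exact single_le_sum (by simp) hi
  rw [fallingEval, eval_eq', sum_div, ← sum_sub_distrib, sum_mul, sum_div]
  refine (abs_sum_le_sum_abs _ _).trans (sum_le_sum fun α hα => ?_)
  have hα : ∑ i, α i = d := by
    rw [← Finsupp.degree_eq_sum, Finsupp.degree_eq_weight_one]; exact hf (mem_support_iff.mp hα)
  rw [mul_div_assoc, mul_div_assoc, ← mul_sub, abs_mul]
  gcongr
  have := abs_prod_descFactorial_div_sub_prod_div_pow_le univ hβ (hα.trans_le hd)
  rwa [hα, ← Nat.cast_sum, hα] at this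

theorem exists_fallingEval_nonneg {f : MvPolynomial σ ℝ} {d : ℕ} (hf : f.IsHomogeneous d)
    (hpos : ∀ x ∈ stdSimplex ℝ σ, 0 < eval x f) :
    ∃ N₀ : ℕ, ∀ β : σ →₀ ℕ, N₀ ≤ β.degree → 0 ≤ fallingEval β f := by
  obtain ⟨ε, hε, hεf⟩ := (isCompact_stdSimplex ℝ σ).exists_forall_le'
    (continuous_eval f).continuousOn hpos
  set A := ∑ α ∈ f.support, |f.coeff α|
  refine ⟨d + ⌈A * d ^ 2 / ε⌉₊ + 1, fun β hβ => ?_⟩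
  have hN : (0 : ℝ) < β.degree := by exact_mod_cast (Nat.succ_pos _).trans_le hβ
  have hAN : A * d ^ 2 / β.degree ≤ ε := by
    rw [div_le_iff₀ hN, ← div_le_iff₀' hε]
    exact (Nat.le_ceil _).trans (by exact_mod_cast (by omega : ⌈A * d ^ 2 / ε⌉₊ ≤ β.degree))
  have hεx := hεf _ (div_degree_mem_stdSimplex (β := β) (by rintro rfl; simp at hN))
  have hest := abs_le.mp (abs_fallingEval_div_sub_eval_le hf (β := β) (by omega))
  rw [← zero_mul ((β.degree : ℝ) ^ d), ← le_div_iff₀ (pow_pos hN d)]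
  linarith [hest.1]

theorem polya (n : ℕ) (f : MvPolynomial (Fin n) ℝ) (d : ℕ)
    (hf : f.IsHomogeneous d)
    (hpos : ∀ x : Fin n → ℝ, (∀ i, 0 ≤ x i) → ∑ i, x i = 1 → 0 < eval x f) :
    ∃ k : ℕ, ∀ α : Fin n →₀ ℕ,
      0 ≤ ((∑ i, X i : MvPolynomial (Fin n) ℝ)^k * f).coeff α := by
  obtain ⟨k, hk⟩ := exists_fallingEval_nonneg hf fun x hx => hpos x hx.1 hx.2
  refine ⟨k, fun β => ?_⟩
  by_cases hβ : β.degree = d + k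
  · have hfac : (0 : ℝ) < ∏ i, ((β i)! : ℝ) := prod_pos fun i _ => by positivity
    refine nonneg_of_mul_nonneg_right ?_ hfac
    rw [prod_factorial_mul_coeff_sum_X_pow_mul hf hβ]
    exact mul_nonneg (by positivity) (hk β (by omega))
  · have hsum : (∑ i, X i : MvPolynomial (Fin n) ℝ).IsHomogeneous 1 :=
      IsHomogeneous.sum _ _ _ fun i _ => isHomogeneous_X ℝ i
    rw [((hsum.pow k).mul hf).coeff_eq_zero (by omega)]
end

section
/- Let f ∈ ℝ[X₁,…,Xₙ]. Suppose that for every x in the simplex Δ there exist m ∈ ℕ, homogeneous polynomials g₁,…,g_m ∈ ℝ[X₁,…,Xₙ] and polynomials h₁,…,h_m with only nonnegative coefficients such that f = g₁h₁ + ⋯ + g_m h_m and gᵢ(x) > 0 for all i. Then there exists k ∈ ℕ such that (X₁+⋯+Xₙ)^k · f has only nonnegative coefficients. -/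
/-!
For a form `g` of degree `d` and `|γ| = k + d`, Pólya's formula gives
`γ! · [X^γ] (∑ Xᵢ)^k g = k! · ∑_β g_β ∏ᵢ γᵢ (γᵢ - 1) ⋯ (γᵢ - βᵢ + 1)`.
For every `t > 0` the sum is `t^d · fallingEval g (γ / t) (1 / t)`, where `fallingEval g y ε` is a
continuous function of `(y, ε)` equal to `g y` at `ε = 0`. So `g x > 0` makes these coefficients
nonnegative as soon as `γ / t` is close to `x` and `t` is large.

A coefficient `[X^α] (∑ Xᵢ)^k g h` with `h ≥ 0` is a nonnegative combination of the
`[X^(α - β)] (∑ Xᵢ)^k g` with `β ∈ supp h`. So for a decomposition `f = ∑ gᵢ hᵢ` valid at `x` we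
take for `W x` the open set of those `(y, ε)` at which every `fallingEval gᵢ (y - ε β) ε` with
`β ∈ supp hᵢ` is positive: it contains `(x, 0)`, and `(α / |α|, 1 / |α|) ∈ W x` makes the
coefficient of `X^α` in every `(∑ Xᵢ)^k f` nonnegative. By the tube lemma some strip
`Δ × (-ρ, ρ)` is covered by the `W x`, and any `k > 1 / ρ` works: `α / |α| ∈ Δ`, and coefficients
with `|α| < k` vanish.
-/

open MvPolynomial Finset
open scoped Nat

theorem IsCompact.exists_prod_ball_subset {X Y : Type*} [TopologicalSpace X]
    [PseudoMetricSpace Y] {K : Set X} (hK : IsCompact K) {y : Y} {N : Set (X × Y)}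
    (hN : IsOpen N) (hKN : K ×ˢ {y} ⊆ N) : ∃ ρ > 0, K ×ˢ Metric.ball y ρ ⊆ N := by
  obtain ⟨u, v, -, hv, hKu, hyv, huv⟩ := generalized_tube_lemma hK isCompact_singleton hN hKN
  obtain ⟨ρ, hρ, hball⟩ := Metric.isOpen_iff.1 hv y (hyv rfl)
  exact ⟨ρ, hρ, (Set.prod_mono hKu hball).trans huv⟩

namespace Finsupp

variable {σ : Type*} [Fintype σ]

theorem prod_factorial_mul_multinomial_tsub {β γ : σ →₀ ℕ} (h : β ≤ γ) :
    (∏ i, (γ i)!) * (γ - β).multinomial = (γ - β).degree ! * ∏ i, (γ i).descFactorial (β i) := by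
  rw [multinomial_eq_of_support_subset (subset_univ _), degree_eq_sum, ← Nat.multinomial_spec,
    ← Finset.prod_congr rfl fun i _ => Nat.factorial_mul_descFactorial (h i),
    Finset.prod_mul_distrib]
  simp only [coe_tsub, Pi.sub_apply]
  ring

theorem inv_degree_smul_mem_stdSimplex {α : σ →₀ ℕ} (hα : 0 < α.degree) :
    (α.degree : ℝ)⁻¹ • (fun i => (α i : ℝ)) ∈ stdSimplex ℝ σ := by
  refine ⟨fun i => by simp only [Pi.smul_apply, smul_eq_mul]; positivity, ?_⟩
  simp only [Pi.smul_apply, smul_eq_mul, ← Finset.mul_sum, ← Nat.cast_sum, ← degree_eq_sum]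
  exact inv_mul_cancel₀ (Nat.cast_pos.2 hα).ne'

end Finsupp

namespace MvPolynomial

section FallingEval

variable {R σ : Type*} [CommRing R]

def fallingPow (y ε : R) (m : ℕ) : R := ∏ j ∈ range m, (y - j * ε)

theorem fallingPow_zero_right (y : R) (m : ℕ) : fallingPow y 0 m = y ^ m := by
  simp [fallingPow]

theorem fallingPow_mul (c y ε : R) (m : ℕ) :
    fallingPow (c * y) (c * ε) m = c ^ m * fallingPow y ε m := by
  have h (j : ℕ) : c * y - j * (c * ε) = c * (y - j * ε) := by ring
  simp only [fallingPow, h, prod_mul_distrib, prod_const, card_range]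

theorem fallingPow_natCast_one (a m : ℕ) : fallingPow (a : R) 1 m = a.descFactorial m := by
  simp [fallingPow, ← descPochhammer_eval_eq_descFactorial, descPochhammer_eval_eq_prod_range]

variable [Fintype σ]

def fallingEval (g : MvPolynomial σ R) (y : σ → R) (ε : R) : R :=
  ∑ β ∈ g.support, g.coeff β * ∏ i, fallingPow (y i) ε (β i)

theorem fallingEval_zero_right (g : MvPolynomial σ R) (y : σ → R) :
    fallingEval g y 0 = eval y g := by
  simp [fallingEval, fallingPow_zero_right, eval_eq']

theorem _root_.Continuous.fallingEval [TopologicalSpace R] [IsTopologicalRing R] {X : Type*}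
    [TopologicalSpace X] (g : MvPolynomial σ R) {y : X → σ → R} {ε : X → R} (hy : Continuous y)
    (hε : Continuous ε) : Continuous fun p => MvPolynomial.fallingEval g (y p) (ε p) := by
  unfold MvPolynomial.fallingEval fallingPow
  fun_prop

theorem IsHomogeneous.fallingEval_smul {g : MvPolynomial σ R} {d : ℕ} (hg : g.IsHomogeneous d)
    (c : R) (y : σ → R) (ε : R) : fallingEval g (c • y) (c * ε) = c ^ d * fallingEval g y ε := by
  rw [fallingEval, fallingEval, mul_sum]
  refine sum_congr rfl fun β hβ => ?_
  have hβd : ∑ i, β i = d := by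
    rw [← Finsupp.degree_eq_sum]
    exact (hg.degree_eq_sum_deg_support hβ).symm
  simp only [Pi.smul_apply, smul_eq_mul, fallingPow_mul, prod_mul_distrib, prod_pow_eq_pow_sum,
    hβd]
  ring

theorem prod_factorial_mul_coeff_sum_X_pow_mul_monomial {k : ℕ} {β γ : σ →₀ ℕ} (c : R)
    (hγ : γ.degree = k + β.degree) :
    (∏ i, ((γ i)! : R)) * coeff γ ((∑ i, X i) ^ k * monomial β c) =
      k ! * (c * ∏ i, ((γ i).descFactorial (β i) : R)) := by
  rw [coeff_mul_monomial']
  split_ifs with hβγ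
  · have hdeg : (γ - β).degree = k := by
      have := congrArg Finsupp.degree (tsub_add_cancel_of_le hβγ)
      rw [map_add] at this
      omega
    have hdeg' : ((γ - β).sum fun _ m => m) = k := hdeg
    rw [coeff_sum_X_pow_of_fintype, if_pos hdeg']
    have := congrArg (Nat.cast (R := R)) (Finsupp.prod_factorial_mul_multinomial_tsub hβγ)
    push_cast [hdeg] at this
    linear_combination c * this
  · obtain ⟨i, hi⟩ : ∃ i, γ i < β i := by simpa [Finsupp.le_def] using hβγ
    have hi' : ((γ i).descFactorial (β i) : R) = 0 := by
      rw [Nat.descFactorial_eq_zero_iff_lt.mpr hi, Nat.cast_zero]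
    rw [mul_zero, prod_eq_zero (mem_univ i) hi', mul_zero, mul_zero]

theorem IsHomogeneous.prod_factorial_mul_coeff_sum_X_pow_mul {g : MvPolynomial σ R} {d k : ℕ}
    (hg : g.IsHomogeneous d) {γ : σ →₀ ℕ} (hγ : γ.degree = k + d) :
    (∏ i, ((γ i)! : R)) * coeff γ ((∑ i, X i) ^ k * g) =
      k ! * fallingEval g (fun i => (γ i : R)) 1 := by
  conv_lhs => rw [g.as_sum, mul_sum, coeff_sum, mul_sum]
  rw [fallingEval, mul_sum]
  refine sum_congr rfl fun β hβ => ?_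
  have hβd : β.degree = d := (hg.degree_eq_sum_deg_support hβ).symm
  simp only [prod_factorial_mul_coeff_sum_X_pow_mul_monomial _ (hβd ▸ hγ), fallingPow_natCast_one]

end FallingEval

theorem coeff_mul_nonneg_of_coeff_tsub_nonneg {R σ : Type*} [CommSemiring R] [PartialOrder R]
    [IsOrderedRing R] {p h : MvPolynomial σ R} {α : σ →₀ ℕ} (hh : ∀ β, 0 ≤ h.coeff β)
    (hp : ∀ β ∈ h.support, β ≤ α → 0 ≤ coeff (α - β) p) : 0 ≤ coeff α (p * h) := by
  classical
  conv_rhs => rw [h.as_sum, mul_sum, coeff_sum]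
  refine sum_nonneg fun β hβ => ?_
  rw [coeff_mul_monomial']
  split_ifs with hβα
  exacts [mul_nonneg (hp β hβ hβα) (hh β), le_rfl]

variable {σ : Type*} [Fintype σ]

theorem coeff_sum_X_pow_mul_eq_zero_of_degree_lt {R : Type*} [CommSemiring R]
    (p : MvPolynomial σ R) {k : ℕ} {α : σ →₀ ℕ} (h : α.degree < k) :
    coeff α ((∑ i, X i) ^ k * p) = 0 := by
  classical
  rw [coeff_mul]
  refine sum_eq_zero fun uv huv => ?_
  have hle : uv.1.degree ≤ α.degree :=
    Finsupp.degree_mono ((mem_antidiagonal.1 huv) ▸ le_self_add)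
  have hne : (uv.1.sum fun _ m => m) ≠ k := fun heq => by
    change uv.1.degree = k at heq
    omega
  rw [coeff_sum_X_pow_of_fintype, if_neg hne, Nat.cast_zero, zero_mul]

theorem IsHomogeneous.coeff_sum_X_pow_mul_nonneg {g : MvPolynomial σ ℝ} {d : ℕ}
    (hg : g.IsHomogeneous d) (k : ℕ) {γ : σ →₀ ℕ} {t : ℝ} (ht : 0 < t)
    (h : 0 ≤ fallingEval g (t⁻¹ • fun i => (γ i : ℝ)) t⁻¹) :
    0 ≤ coeff γ ((∑ i, X i) ^ k * g) := by
  by_cases hγ : γ.degree = k + d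
  · have hscale : fallingEval g (fun i => (γ i : ℝ)) 1 =
        t ^ d * fallingEval g (t⁻¹ • fun i => (γ i : ℝ)) t⁻¹ := by
      rw [← hg.fallingEval_smul, smul_smul, mul_inv_cancel₀ ht.ne', one_smul]
    have hfac : 0 < ∏ i, ((γ i)! : ℝ) := prod_pos fun i _ => Nat.cast_pos.2 (γ i).factorial_pos
    refine nonneg_of_mul_nonneg_right ?_ hfac
    rw [hg.prod_factorial_mul_coeff_sum_X_pow_mul hγ, hscale]
    exact mul_nonneg (by positivity) (mul_nonneg (by positivity) h)
  · have hsum : (∑ i, X i : MvPolynomial σ ℝ).IsHomogeneous 1 :=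
      IsHomogeneous.sum _ _ _ fun i _ => isHomogeneous_X ℝ i
    rw [((hsum.pow k).mul hg).coeff_eq_zero (by simpa using hγ)]

def HasPositiveDecompositionAt (f : MvPolynomial σ ℝ) (x : σ → ℝ) : Prop :=
  ∃ (m : ℕ) (g h : Fin m → MvPolynomial σ ℝ),
    (∀ i, ∃ d : ℕ, (g i).IsHomogeneous d) ∧
    (∀ i, ∀ α : σ →₀ ℕ, 0 ≤ (h i).coeff α) ∧
    f = ∑ i, g i * h i ∧
    (∀ i, 0 < eval x (g i))

theorem HasPositiveDecompositionAt.exists_isOpen_coeff_nonneg {f : MvPolynomial σ ℝ}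
    {x : σ → ℝ} (hx : HasPositiveDecompositionAt f x) :
    ∃ W : Set ((σ → ℝ) × ℝ), IsOpen W ∧ (x, 0) ∈ W ∧
      ∀ α : σ →₀ ℕ, 0 < α.degree →
        ((α.degree : ℝ)⁻¹ • (fun i => (α i : ℝ)), (α.degree : ℝ)⁻¹) ∈ W →
        ∀ k, 0 ≤ coeff α ((∑ i, X i) ^ k * f) := by
  obtain ⟨m, g, h, hg, hh, rfl, hgx⟩ := hx
  choose d hd using hg
  have hcont (i : Fin m) (β : σ →₀ ℕ) :
      Continuous fun p : (σ → ℝ) × ℝ => fallingEval (g i) (p.1 - p.2 • fun j => (β j : ℝ)) p.2 :=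
    (continuous_fst.sub (continuous_snd.smul continuous_const)).fallingEval (g i) continuous_snd
  refine ⟨⋂ i, ⋂ β ∈ (h i).support,
    {p | 0 < fallingEval (g i) (p.1 - p.2 • fun j => (β j : ℝ)) p.2}, ?_, ?_, ?_⟩
  · exact isOpen_iInter_of_finite fun i => isOpen_biInter_finset fun β _ =>
      isOpen_lt continuous_const (hcont i β)
  · simp only [Set.mem_iInter]
    intro i β _
    simpa [fallingEval_zero_right] using hgx i
  · intro α hα hW k
    rw [mul_sum, coeff_sum]
    refine sum_nonneg fun i _ => ?_
    rw [← mul_assoc]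
    refine coeff_mul_nonneg_of_coeff_tsub_nonneg (hh i) fun β hβ hβα =>
      (hd i).coeff_sum_X_pow_mul_nonneg k (Nat.cast_pos.2 hα) ?_
    have hsub : (fun j => ((α - β) j : ℝ)) = (fun j => (α j : ℝ)) - fun j => (β j : ℝ) := by
      ext j
      simp [Nat.cast_sub (hβα j)]
    rw [hsub, smul_sub]
    exact (Set.mem_iInter₂.1 (Set.mem_iInter.1 hW i) β hβ).le

end MvPolynomial

open MvPolynomial

theorem local_decomposition_polya (n : ℕ) (f : MvPolynomial (Fin n) ℝ)
    (hyp : ∀ x : Fin n → ℝ, (∀ i, 0 ≤ x i) → ∑ i, x i = 1 →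
      ∃ (m : ℕ) (g h : Fin m → MvPolynomial (Fin n) ℝ),
        (∀ i, ∃ d : ℕ, (g i).IsHomogeneous d) ∧
        (∀ i, ∀ α : Fin n →₀ ℕ, 0 ≤ (h i).coeff α) ∧
        f = ∑ i, g i * h i ∧
        (∀ i, 0 < eval x (g i))) :
    ∃ k : ℕ, ∀ α : Fin n →₀ ℕ,
      0 ≤ ((∑ i, X i : MvPolynomial (Fin n) ℝ)^k * f).coeff α := by
  choose! W hWo hxW hW using fun x (hx : x ∈ stdSimplex ℝ (Fin n)) =>
    HasPositiveDecompositionAt.exists_isOpen_coeff_nonneg (hyp x hx.1 hx.2)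
  obtain ⟨ρ, hρ, hball⟩ := (isCompact_stdSimplex ℝ (Fin n)).exists_prod_ball_subset
    (isOpen_biUnion hWo) (y := 0) (by
      rintro ⟨x, _⟩ ⟨hx, rfl⟩
      exact Set.mem_biUnion hx (hxW x hx))
  obtain ⟨k, hk⟩ := exists_nat_one_div_lt hρ
  refine ⟨k + 1, fun α => ?_⟩
  rcases lt_or_ge α.degree (k + 1) with hlt | hle
  · exact (coeff_sum_X_pow_mul_eq_zero_of_degree_lt f hlt).ge
  have hα : 0 < α.degree := by omega
  have hε : (α.degree : ℝ)⁻¹ ∈ Metric.ball 0 ρ := by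
    rw [mem_ball_zero_iff, Real.norm_eq_abs, abs_of_pos (by positivity), inv_eq_one_div]
    exact (one_div_le_one_div_of_le (by positivity) (by exact_mod_cast hle)).trans_lt hk
  obtain ⟨x, hx, hαW⟩ :=
    Set.mem_iUnion₂.1 (hball (Set.mk_mem_prod (Finsupp.inv_degree_smul_mem_stdSimplex hα) hε))
  exact hW x hx α hα hαW (k + 1)
end

section
/- (Membership criterion) Let A be a commutative ring, T ⊆ A a weakly divisible archimedean semiring (0,1 ∈ T, T+T ⊆ T, T·T ⊆ T, ℤ+T = A, and 1/r ∈ T for some integer r ≥ 2 invertible in A), and a ∈ A. Suppose φ(a) ≥ 0 for every ring homomorphism φ : A → ℝ with φ(T) ⊆ [0,∞), and there is an identity a = b₁t₁ + ⋯ + b_m t_m with bᵢ ∈ A, tᵢ ∈ T, such that φ(bᵢ) > 0 for all i and all ring homomorphisms φ : A → ℝ with φ(T) ⊆ [0,∞) and φ(a) = 0. Then a ∈ T. -/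
/-!
Let `M` be the `T`-module spanned by the `tᵢ` and `e = ∑ tᵢ`; every element of the ideal
`(t₁, …, tₘ)` is bounded by integer multiples of `e` in the preorder of `M`. If `σ a - e ∈ M`
for some `σ ∈ T`, a geometric series in `1 - u^E σ` (where `u = 1/r ∈ T` and `σ ≤ r^E`)
shows `a ∈ M ⊆ T`. Otherwise Zorn's lemma gives a `T`-module `N ⊇ M ∪ {-a}` maximal with
`-e ∉ N`. Maximality makes `N` total on the `e`-bounded elements, so
`φ x = inf {n/m | m x ≤ n e}` is additive there with `φ e = 1` and `φ ≥ 0` on `N`, and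
`ψ y = φ (y e)` is a ring homomorphism `A → ℝ`, nonnegative on `T`, with
`φ (y x) = ψ y * φ x`. Now `φ a ≤ 0` gives `ψ a ≤ 0`, hence `ψ a = 0` and all `ψ bᵢ > 0`, so
`φ a = ∑ ψ bᵢ φ tᵢ > 0` since the `φ tᵢ ≥ 0` sum to `1`: a contradiction.
-/

open Finset

namespace AddSubmonoid

variable {G : Type*} [AddCommGroup G] (C : AddSubmonoid G) (e : G)

def bounded : AddSubgroup G where
  carrier := {x | ∃ n : ℕ, n • e - x ∈ C ∧ n • e + x ∈ C}
  zero_mem' := ⟨0, by simp [C.zero_mem]⟩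
  add_mem' := by
    rintro x y ⟨n, hn, hn'⟩ ⟨k, hk, hk'⟩
    refine ⟨n + k, ?_, ?_⟩
    · convert C.add_mem hn hk using 1; module
    · convert C.add_mem hn' hk' using 1; module
  neg_mem' := by
    rintro x ⟨n, hn, hn'⟩
    exact ⟨n, by rwa [sub_neg_eq_add], by rwa [← sub_eq_add_neg]⟩

def ratUpperBounds (x : G) : Set ℝ :=
  {q | ∃ (n : ℤ) (m : ℕ), 0 < m ∧ n • e - m • x ∈ C ∧ q = n / m}

noncomputable def state (x : G) : ℝ := sInf (C.ratUpperBounds e x)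

variable {C e}

theorem bounded_mono {D : AddSubmonoid G} (h : C ≤ D) : C.bounded e ≤ D.bounded e :=
  fun _ ⟨n, hn, hn'⟩ => ⟨n, h hn, h hn'⟩

theorem self_mem_bounded (he : e ∈ C) : e ∈ C.bounded e :=
  ⟨1, by simp [C.zero_mem], by simpa using C.add_mem he he⟩

theorem mem_bounded_sum {ι : Type*} {s : Finset ι} {t : ι → G} (ht : ∀ i ∈ s, t i ∈ C)
    {i : ι} (hi : i ∈ s) : t i ∈ C.bounded (∑ j ∈ s, t j) := by
  classical
  refine ⟨1, ?_, ?_⟩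
  · rw [one_smul, ← sum_erase_eq_sub hi]
    exact C.sum_mem fun j hj => ht j (mem_of_mem_erase hj)
  · rw [one_smul]
    exact C.add_mem (C.sum_mem ht) (ht i hi)

theorem nonneg_of_zsmul_mem (he : e ∈ C) (hne : -e ∉ C) {k : ℤ} (hk : k • e ∈ C) : 0 ≤ k := by
  by_contra! hk0
  obtain ⟨n, rfl⟩ : ∃ n : ℕ, k = -(n + 1) := ⟨(-k - 1).toNat, by omega⟩
  apply hne
  convert C.add_mem hk (C.nsmul_mem he n) using 1
  module

theorem div_le_div_of_sub_mem (he : e ∈ C) (hne : -e ∉ C) {x : G} {n n' : ℤ} {m m' : ℕ}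
    (hm : 0 < m) (hm' : 0 < m') (hup : n • e - m • x ∈ C) (hlow : m' • x - n' • e ∈ C) :
    (n' : ℝ) / m' ≤ n / m := by
  have h : 0 ≤ (m' : ℤ) * n - m * n' := by
    refine nonneg_of_zsmul_mem he hne ?_
    convert C.add_mem (C.nsmul_mem hup m') (C.nsmul_mem hlow m) using 1
    module
  rw [div_le_div_iff₀ (by positivity) (by positivity)]
  exact_mod_cast (by linarith : n' * (m : ℤ) ≤ n * m')

theorem ratUpperBounds_nonempty {x : G} (hx : x ∈ C.bounded e) :
    (C.ratUpperBounds e x).Nonempty := by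
  obtain ⟨c, hc, -⟩ := hx
  exact ⟨_, c, 1, one_pos, by simpa using hc, rfl⟩

theorem bddBelow_ratUpperBounds (he : e ∈ C) (hne : -e ∉ C) {x : G} (hx : x ∈ C.bounded e) :
    BddBelow (C.ratUpperBounds e x) := by
  obtain ⟨c, -, hc⟩ := hx
  refine ⟨-c, ?_⟩
  rintro _ ⟨n, m, hm, h, rfl⟩
  have := div_le_div_of_sub_mem he hne hm one_pos h (n' := -c) (by simpa [add_comm] using hc)
  simpa using this

theorem state_le (he : e ∈ C) (hne : -e ∉ C) {x : G} (hx : x ∈ C.bounded e) {n : ℤ} {m : ℕ}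
    (hm : 0 < m) (h : n • e - m • x ∈ C) : C.state e x ≤ n / m :=
  csInf_le (bddBelow_ratUpperBounds he hne hx) ⟨n, m, hm, h, rfl⟩

theorem le_state (he : e ∈ C) (hne : -e ∉ C) {x : G} (hx : x ∈ C.bounded e) {n : ℤ} {m : ℕ}
    (hm : 0 < m) (h : m • x - n • e ∈ C) : n / m ≤ C.state e x :=
  le_csInf (ratUpperBounds_nonempty hx) fun _ ⟨_, _, hm', h', hq⟩ =>
    hq ▸ div_le_div_of_sub_mem he hne hm' hm h' h

theorem state_nonneg (he : e ∈ C) (hne : -e ∉ C) {x : G} (hx : x ∈ C.bounded e) (hxC : x ∈ C) :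
    0 ≤ C.state e x := by
  simpa using le_state he hne hx one_pos (n := 0) (by simpa using hxC)

theorem state_self (he : e ∈ C) (hne : -e ∉ C) : C.state e e = 1 := by
  have h : (1 : ℤ) • e - (1 : ℕ) • e ∈ C := by simp [C.zero_mem]
  have h' : (1 : ℕ) • e - (1 : ℤ) • e ∈ C := by simp [C.zero_mem]
  exact le_antisymm (by simpa using state_le he hne (self_mem_bounded he) one_pos h)
    (by simpa using le_state he hne (self_mem_bounded he) one_pos h')

theorem state_zero (he : e ∈ C) (hne : -e ∉ C) : C.state e 0 = 0 := by
  have h : (0 : ℤ) • e - (1 : ℕ) • (0 : G) ∈ C := by simp [C.zero_mem]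
  exact le_antisymm (by simpa using state_le he hne (zero_mem _) one_pos h)
    (state_nonneg he hne (zero_mem _) C.zero_mem)

theorem state_add_le (he : e ∈ C) (hne : -e ∉ C) {x y : G} (hx : x ∈ C.bounded e)
    (hy : y ∈ C.bounded e) : C.state e (x + y) ≤ C.state e x + C.state e y := by
  have key : ∀ q ∈ C.ratUpperBounds e x, ∀ q' ∈ C.ratUpperBounds e y,
      C.state e (x + y) - q' ≤ q := by
    rintro _ ⟨n, m, hm, h, rfl⟩ _ ⟨n', m', hm', h', rfl⟩
    have hsum : ((m' * n + m * n' : ℤ)) • e - (m * m') • (x + y) ∈ C := by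
      convert C.add_mem (C.nsmul_mem h m') (C.nsmul_mem h' m) using 1
      module
    have := state_le he hne (add_mem hx hy) (Nat.mul_pos hm hm') hsum
    rw [sub_le_iff_le_add]
    convert this using 1
    push_cast
    field_simp
  have h : ∀ q' ∈ C.ratUpperBounds e y, C.state e (x + y) - q' ≤ C.state e x := fun q' hq' =>
    le_csInf (ratUpperBounds_nonempty hx) fun q hq => key q hq q' hq'
  have : C.state e (x + y) - C.state e x ≤ C.state e y :=
    le_csInf (ratUpperBounds_nonempty hy) fun q' hq' => by linarith [h q' hq']
  linarith

theorem sub_mem_of_lt_state (he : e ∈ C) (hne : -e ∉ C)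
    (htot : ∀ x ∈ C.bounded e, x ∈ C ∨ -x ∈ C) {x : G} (hx : x ∈ C.bounded e) {n : ℤ}
    {m : ℕ} (hm : 0 < m) (h : n / m < C.state e x) : m • x - n • e ∈ C := by
  have hb : n • e - m • x ∈ C.bounded e :=
    sub_mem (zsmul_mem (self_mem_bounded he) n) (nsmul_mem hx m)
  rcases htot _ hb with h' | h'
  · exact absurd (state_le he hne hx hm h') h.not_ge
  · rwa [neg_sub] at h'

theorem state_neg (he : e ∈ C) (hne : -e ∉ C) (htot : ∀ x ∈ C.bounded e, x ∈ C ∨ -x ∈ C)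
    {x : G} (hx : x ∈ C.bounded e) : C.state e (-x) = -C.state e x := by
  refine le_antisymm ?_ ?_
  · rw [le_neg]
    refine le_of_forall_rat_lt_imp_le fun q hq => ?_
    rw [Rat.cast_def] at hq ⊢
    have h := sub_mem_of_lt_state he hne htot hx q.den_pos hq
    have := state_le he hne (neg_mem hx) (n := -q.num) q.den_pos
      (by simpa [add_comm, sub_eq_add_neg] using h)
    push_cast at this
    rw [neg_div] at this
    linarith
  · have := state_add_le he hne hx (neg_mem hx)
    rw [add_neg_cancel, state_zero he hne] at this
    linarith

theorem state_add (he : e ∈ C) (hne : -e ∉ C) (htot : ∀ x ∈ C.bounded e, x ∈ C ∨ -x ∈ C)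
    {x y : G} (hx : x ∈ C.bounded e) (hy : y ∈ C.bounded e) :
    C.state e (x + y) = C.state e x + C.state e y := by
  refine le_antisymm (state_add_le he hne hx hy) ?_
  have := state_add_le he hne (add_mem hx hy) (neg_mem hy)
  rw [add_neg_cancel_right, state_neg he hne htot hy] at this
  linarith

theorem state_sub (he : e ∈ C) (hne : -e ∉ C) (htot : ∀ x ∈ C.bounded e, x ∈ C ∨ -x ∈ C)
    {x y : G} (hx : x ∈ C.bounded e) (hy : y ∈ C.bounded e) :
    C.state e (x - y) = C.state e x - C.state e y := by
  rw [sub_eq_add_neg, state_add he hne htot hx (neg_mem hy), state_neg he hne htot hy,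
    sub_eq_add_neg]

theorem state_zsmul (he : e ∈ C) (hne : -e ∉ C) (htot : ∀ x ∈ C.bounded e, x ∈ C ∨ -x ∈ C)
    (k : ℤ) {x : G} (hx : x ∈ C.bounded e) : C.state e (k • x) = k * C.state e x := by
  let f : C.bounded e →+ ℝ :=
    AddMonoidHom.mk' (fun x => C.state e x) fun x y => state_add he hne htot x.2 y.2
  simpa [f] using map_zsmul f k ⟨x, hx⟩

theorem state_sum (he : e ∈ C) (hne : -e ∉ C) (htot : ∀ x ∈ C.bounded e, x ∈ C ∨ -x ∈ C)
    {ι : Type*} (s : Finset ι) {t : ι → G} (ht : ∀ i ∈ s, t i ∈ C.bounded e) :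
    C.state e (∑ i ∈ s, t i) = ∑ i ∈ s, C.state e (t i) := by
  classical
  induction s using Finset.induction_on with
  | empty => simpa using state_zero he hne
  | insert i s hi ih =>
    rw [sum_insert hi, sum_insert hi, state_add he hne htot (ht i (mem_insert_self i s))
      ((C.bounded e).sum_mem fun j hj => ht j (mem_insert_of_mem hj)),
      ih fun j hj => ht j (mem_insert_of_mem hj)]

theorem sub_mem_of_state_lt (he : e ∈ C) (hne : -e ∉ C)
    (htot : ∀ x ∈ C.bounded e, x ∈ C ∨ -x ∈ C) {x : G} (hx : x ∈ C.bounded e) {n : ℤ}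
    {m : ℕ} (hm : 0 < m) (h : C.state e x < n / m) : n • e - m • x ∈ C := by
  have h' : ((-n : ℤ) : ℝ) / m < C.state e (-x) := by
    rw [state_neg he hne htot hx]; push_cast; rw [neg_div]; linarith
  simpa [sub_eq_add_neg, add_comm] using sub_mem_of_lt_state he hne htot (neg_mem hx) hm h'

theorem state_nonpos_of_neg_mem (he : e ∈ C) (hne : -e ∉ C)
    (htot : ∀ x ∈ C.bounded e, x ∈ C ∨ -x ∈ C) {x : G} (hx : x ∈ C.bounded e) (hxC : -x ∈ C) :
    C.state e x ≤ 0 := by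
  have := state_nonneg he hne (neg_mem hx) hxC
  rw [state_neg he hne htot hx] at this
  linarith

end AddSubmonoid

namespace Submodule

variable {R M : Type*} [Semiring R] [AddCommMonoid M] [Module R M]

theorem exists_le_maximal_notMem (p₀ : Submodule R M) {z : M} (h : z ∉ p₀) :
    ∃ p, p₀ ≤ p ∧ Maximal (fun p : Submodule R M => z ∉ p) p := by
  refine zorn_le_nonempty₀ {p | z ∉ p} (fun c hc hchain p hp => ⟨sSup c, ?_, fun _ => le_sSup⟩)
    p₀ h
  change z ∉ sSup c
  rw [mem_sSup_of_directed ⟨p, hp⟩ hchain.directedOn]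
  rintro ⟨q, hq, hzq⟩
  exact hc hq hzq

theorem exists_add_smul_eq_of_maximal {p : Submodule R M} {z x : M}
    (hmax : Maximal (fun p : Submodule R M => z ∉ p) p) (hx : x ∉ p) :
    ∃ y ∈ p, ∃ a : R, y + a • x = z := by
  have hz : z ∈ p ⊔ span R {x} := by
    by_contra h
    exact hx (hmax.2 h le_sup_left (mem_sup_right (mem_span_singleton_self x)))
  obtain ⟨y, hy, _, hx', rfl⟩ := mem_sup.mp hz
  obtain ⟨a, rfl⟩ := mem_span_singleton.mp hx'
  exact ⟨y, hy, a, rfl⟩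

end Submodule

namespace Subsemiring

variable {A : Type*} [CommRing A] {T : Subsemiring A}

def IsArchimedean (T : Subsemiring A) : Prop :=
  ∀ a : A, ∃ n : ℤ, ∃ t ∈ T, a = n + t

theorem mem_of_mem_span {s : Set A} (hs : s ⊆ T) {x : A}
    (hx : x ∈ Submodule.span T s) : x ∈ T := by
  induction hx using Submodule.span_induction with
  | mem x hx => exact hs hx
  | zero => exact T.zero_mem
  | add _ _ _ _ hx hy => exact T.add_mem hx hy
  | smul s _ _ hx => exact T.mul_mem s.2 hx

theorem natCast_sub_mem_of_le {x : A} {n n' : ℕ} (h : n ≤ n')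
    (hx : (n : A) - x ∈ T) : (n' : A) - x ∈ T := by
  have : (n' : A) - x = ((n' - n : ℕ) : A) + ((n : A) - x) := by
    rw [Nat.cast_sub h]; ring
  rw [this]
  exact T.add_mem (natCast_mem T _) hx

theorem IsArchimedean.exists_natCast_sub_mem (hT : T.IsArchimedean) (x : A) :
    ∃ n : ℕ, (n : A) - x ∈ T := by
  obtain ⟨k, t, ht, hx⟩ := hT (-x)
  refine ⟨(-k).toNat, ?_⟩
  have : ((-k).toNat : A) - x = ((-k).toNat + k : ℤ) + t := by
    push_cast; linear_combination hx
  rw [this, ← Int.toNat_of_nonneg (by omega : 0 ≤ (-k).toNat + k)]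
  exact T.add_mem (by exact_mod_cast natCast_mem T _) ht

theorem IsArchimedean.exists_pow_sub_mem (hT : T.IsArchimedean) {r : ℕ}
    (hr : 1 < r) (x : A) : ∃ E : ℕ, (r : A) ^ E - x ∈ T := by
  obtain ⟨n, hn⟩ := hT.exists_natCast_sub_mem x
  exact ⟨n, by exact_mod_cast natCast_sub_mem_of_le (Nat.lt_pow_self hr).le hn⟩

theorem geom_sum_sub_mem {Q : A} (hQ : Q ∈ T) (hQ' : 1 - Q ∈ T) (k : ℕ) :
    ∑ j ∈ range k, Q ^ j - k * Q ^ k ∈ T := by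
  induction k with
  | zero => simp [T.zero_mem]
  | succ k ih =>
    have : ∑ j ∈ range (k + 1), Q ^ j - (k + 1 : ℕ) * Q ^ (k + 1)
        = (∑ j ∈ range k, Q ^ j - k * Q ^ k) + (k + 1 : ℕ) * Q ^ k * (1 - Q) := by
      rw [sum_range_succ]; push_cast; ring
    rw [this]
    exact T.add_mem ih (T.mul_mem (T.mul_mem (natCast_mem T _) (T.pow_mem hQ k)) hQ')

end Subsemiring

namespace Submodule

variable {A : Type*} [CommRing A] {T : Subsemiring A}

theorem mul_mem_of_mem_subsemiring (N : Submodule T A) {s x : A} (hs : s ∈ T)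
    (hx : x ∈ N) : s * x ∈ N :=
  N.smul_mem ⟨s, hs⟩ hx

theorem mem_of_one_sub_mul_sub_mem (M : Submodule T A) {Q w e a : A} (k : ℕ)
    (hQ : Q ∈ T) (hQ' : 1 - Q ∈ T) (hw : w ∈ T) (he : e ∈ M)
    (h₁ : (1 - Q) * a - w * e ∈ M) (h₂ : k * w * e + a ∈ M) : a ∈ M := by
  have key : a = Q ^ k * (k * w * e + a) + (∑ j ∈ range k, Q ^ j) * ((1 - Q) * a - w * e)
      + w * (∑ j ∈ range k, Q ^ j - k * Q ^ k) * e := by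
    linear_combination a * geom_sum_mul Q k
  rw [key]
  refine M.add_mem (M.add_mem ?_ ?_) ?_
  · exact M.mul_mem_of_mem_subsemiring (T.pow_mem hQ k) h₂
  · exact M.mul_mem_of_mem_subsemiring (T.sum_mem fun j _ => T.pow_mem hQ j) h₁
  · exact M.mul_mem_of_mem_subsemiring (T.mul_mem hw (T.geom_sum_sub_mem hQ hQ' k)) he

theorem mem_of_mul_sub_mem (hT : T.IsArchimedean) {r : ℕ} {u : A} (hr : 1 < r)
    (hru : (r : A) * u = 1) (hu : u ∈ T) (M : Submodule T A) {e a σ : A} (he : e ∈ M)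
    (ha : a ∈ M.toAddSubmonoid.bounded e) (hσ : σ ∈ T) (hσa : σ * a - e ∈ M) : a ∈ M := by
  obtain ⟨E, hE⟩ := hT.exists_pow_sub_mem hr σ
  obtain ⟨c, -, hc⟩ := ha
  have hruE : (r : A) ^ E * u ^ E = 1 := by rw [← mul_pow, hru, one_pow]
  refine M.mem_of_one_sub_mul_sub_mem (Q := u ^ E * ((r : A) ^ E - σ)) (w := u ^ E) (c * r ^ E)
    (T.mul_mem (T.pow_mem hu E) hE) ?_ (T.pow_mem hu E) he ?_ ?_
  · convert T.mul_mem (T.pow_mem hu E) hσ using 1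
    linear_combination -hruE
  · convert M.mul_mem_of_mem_subsemiring (T.pow_mem hu E) hσa using 1
    linear_combination (-a) * hruE
  · rw [mem_toAddSubmonoid, nsmul_eq_mul] at hc
    convert hc using 1
    push_cast
    linear_combination (c * e) * hruE

theorem mul_mem_bounded (hT : T.IsArchimedean) (N : Submodule T A) {e : A}
    (he : e ∈ N) (y : A) {x : A} (hx : x ∈ N.toAddSubmonoid.bounded e) :
    y * x ∈ N.toAddSubmonoid.bounded e := by
  obtain ⟨k, s, hs, rfl⟩ := hT y
  obtain ⟨n, hn⟩ := hT.exists_natCast_sub_mem s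
  rw [add_mul, ← zsmul_eq_mul]
  refine add_mem (zsmul_mem hx k) ?_
  obtain ⟨c, hc, hc'⟩ := hx
  refine ⟨n * c, ?_, ?_⟩ <;> rw [mem_toAddSubmonoid, nsmul_eq_mul]
  · convert N.add_mem (N.mul_mem_of_mem_subsemiring hn (N.toAddSubmonoid.nsmul_mem he c))
      (N.mul_mem_of_mem_subsemiring hs hc) using 1
    rw [nsmul_eq_mul]; push_cast; ring
  · convert N.add_mem (N.mul_mem_of_mem_subsemiring hn (N.toAddSubmonoid.nsmul_mem he c))
      (N.mul_mem_of_mem_subsemiring hs hc') using 1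
    rw [nsmul_eq_mul]; push_cast; ring

theorem mem_or_neg_mem_of_maximal {N : Submodule T A} {e : A}
    (hmax : Maximal (fun N : Submodule T A => -e ∉ N) N) (he : e ∈ N) {x : A}
    (hx : x ∈ N.toAddSubmonoid.bounded e) : x ∈ N ∨ -x ∈ N := by
  by_contra! h
  obtain ⟨n₁, hn₁, s₁, h₁⟩ := exists_add_smul_eq_of_maximal hmax h.1
  obtain ⟨n₂, hn₂, s₂, h₂⟩ := exists_add_smul_eq_of_maximal hmax h.2
  rw [Subsemiring.smul_def, smul_eq_mul] at h₁ h₂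
  obtain ⟨c, hc, hc'⟩ := hx
  rw [nsmul_eq_mul] at hc hc'
  apply hmax.1
  -- `-e = -2 e + e`, and `-2 e` is a `T`-combination of `n₁`, `n₂` and the bounds `c e ∓ x`
  have key : -e = (c * s₂ + 1) * n₁ + (c * s₁ + 1) * n₂ + s₂ * (c * e - x) + s₁ * (c * e + x)
      + e := by
    linear_combination -(c * (s₂ : A) + 1) * h₁ - (c * (s₁ : A) + 1) * h₂
  have hcs : ∀ s : T, (c : A) * s + 1 ∈ T := fun s =>
    T.add_mem (T.mul_mem (natCast_mem T c) s.2) T.one_mem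
  rw [key]
  refine N.add_mem (N.add_mem (N.add_mem (N.add_mem ?_ ?_) ?_) ?_) he
  · exact N.mul_mem_of_mem_subsemiring (hcs s₂) hn₁
  · exact N.mul_mem_of_mem_subsemiring (hcs s₁) hn₂
  · exact N.mul_mem_of_mem_subsemiring s₂.2 hc
  · exact N.mul_mem_of_mem_subsemiring s₁.2 hc'

theorem exists_maximal_of_notMem (hT : T.IsArchimedean) {r : ℕ} {u : A}
    (hr : 1 < r) (hru : (r : A) * u = 1) (hu : u ∈ T) {M : Submodule T A} {e a : A}
    (he : e ∈ M) (ha : a ∈ M.toAddSubmonoid.bounded e) (haM : a ∉ M) :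
    ∃ N : Submodule T A, M ≤ N ∧ -a ∈ N ∧ Maximal (fun N : Submodule T A => -e ∉ N) N := by
  have h : -e ∉ M ⊔ span T {-a} := by
    intro h
    obtain ⟨m, hm, _, hz, hmz⟩ := mem_sup.mp h
    obtain ⟨σ, rfl⟩ := mem_span_singleton.mp hz
    refine haM (M.mem_of_mul_sub_mem hT hr hru hu he ha σ.2 ?_)
    rw [Subsemiring.smul_def, smul_eq_mul] at hmz
    convert hm using 1
    linear_combination -hmz
  obtain ⟨N, hN, hmax⟩ := (M ⊔ span T {-a}).exists_le_maximal_notMem h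
  exact ⟨N, le_sup_left.trans hN, hN (mem_sup_right (mem_span_singleton_self _)), hmax⟩

section State

open AddSubmonoid

variable {N : Submodule T A} {e : A}

theorem state_mul_le (hT : T.IsArchimedean) (he : e ∈ N) (hne : -e ∉ N)
    (htot : ∀ x ∈ N.toAddSubmonoid.bounded e, x ∈ N ∨ -x ∈ N) {s x : A} (hs : s ∈ T)
    (hx : x ∈ N.toAddSubmonoid.bounded e) :
    N.toAddSubmonoid.state e (s * x) ≤
      N.toAddSubmonoid.state e (s * e) * N.toAddSubmonoid.state e x := by
  set C := N.toAddSubmonoid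
  have hseb : s * e ∈ C.bounded e := N.mul_mem_bounded hT he s (self_mem_bounded he)
  have hsxb : s * x ∈ C.bounded e := N.mul_mem_bounded hT he s hx
  have hθ : 0 ≤ C.state e (s * e) :=
    state_nonneg he hne hseb (N.mul_mem_of_mem_subsemiring hs he)
  have key : ∀ q : ℚ, C.state e x < q → C.state e (s * x) ≤ q * C.state e (s * e) := by
    intro q hq
    rw [Rat.cast_def] at hq ⊢
    have h : q.num • (s * e) - q.den • (s * x) ∈ N := by
      convert N.mul_mem_of_mem_subsemiring hs (sub_mem_of_state_lt he hne htot hx q.den_pos hq)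
        using 1
      simp only [mul_sub, mul_smul_comm]
    have hb := (C.bounded e).sub_mem (zsmul_mem hseb q.num) (nsmul_mem hsxb q.den)
    have := state_nonneg he hne hb h
    rw [state_sub he hne htot (zsmul_mem hseb _) (nsmul_mem hsxb _), ← natCast_zsmul,
      state_zsmul he hne htot _ hseb, state_zsmul he hne htot _ hsxb] at this
    rw [div_mul_eq_mul_div, le_div_iff₀ (by exact_mod_cast q.den_pos)]
    push_cast at this
    linarith
  rcases hθ.eq_or_lt with hθ | hθ
  · obtain ⟨q, hq⟩ := exists_rat_gt (C.state e x)
    simpa [← hθ] using key q hq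
  · rw [← div_le_iff₀' hθ]
    exact le_of_forall_lt_rat_imp_le fun q hq => (div_le_iff₀ hθ).2 (key q hq)

theorem state_mul_of_mem (hT : T.IsArchimedean) (he : e ∈ N) (hne : -e ∉ N)
    (htot : ∀ x ∈ N.toAddSubmonoid.bounded e, x ∈ N ∨ -x ∈ N) {s x : A} (hs : s ∈ T)
    (hx : x ∈ N.toAddSubmonoid.bounded e) :
    N.toAddSubmonoid.state e (s * x) =
      N.toAddSubmonoid.state e (s * e) * N.toAddSubmonoid.state e x := by
  set C := N.toAddSubmonoid
  obtain ⟨n, hn⟩ := hT.exists_natCast_sub_mem s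
  -- `s` and `n - s` both lie in `T` and add up to `n`, so neither submultiplicativity is strict
  have hsplit : ∀ y ∈ C.bounded e,
      C.state e (s * y) + C.state e ((n - s) * y) = n * C.state e y := by
    intro y hy
    rw [← state_add he hne htot (N.mul_mem_bounded hT he _ hy) (N.mul_mem_bounded hT he _ hy),
      ← add_mul, add_sub_cancel, ← Int.cast_natCast, ← zsmul_eq_mul, state_zsmul he hne htot _ hy]
    push_cast; rfl
  have hxsplit := hsplit x hx
  have hesplit := hsplit e (self_mem_bounded he)
  rw [state_self he hne] at hesplit
  have : n * C.state e x =
      C.state e (s * e) * C.state e x + C.state e ((n - s) * e) * C.state e x := by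
    rw [← add_mul, hesplit, mul_one]
  linarith [state_mul_le hT he hne htot hs hx, state_mul_le hT he hne htot hn hx]

theorem state_mul (hT : T.IsArchimedean) (he : e ∈ N) (hne : -e ∉ N)
    (htot : ∀ x ∈ N.toAddSubmonoid.bounded e, x ∈ N ∨ -x ∈ N) (y : A) {x : A}
    (hx : x ∈ N.toAddSubmonoid.bounded e) :
    N.toAddSubmonoid.state e (y * x) =
      N.toAddSubmonoid.state e (y * e) * N.toAddSubmonoid.state e x := by
  set C := N.toAddSubmonoid
  obtain ⟨k, s, hs, rfl⟩ := hT y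
  have hsplit : ∀ z ∈ C.bounded e,
      C.state e ((k + s) * z) = k * C.state e z + C.state e (s * z) := by
    intro z hz
    rw [add_mul, ← zsmul_eq_mul,
      state_add he hne htot (zsmul_mem hz k) (N.mul_mem_bounded hT he s hz),
      state_zsmul he hne htot _ hz]
  rw [hsplit x hx, hsplit e (self_mem_bounded he), state_mul_of_mem hT he hne htot hs hx,
    state_self he hne]
  ring

theorem exists_ringHom_state_mul (hT : T.IsArchimedean) (he : e ∈ N) (hne : -e ∉ N)
    (htot : ∀ x ∈ N.toAddSubmonoid.bounded e, x ∈ N ∨ -x ∈ N) :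
    ∃ ψ : A →+* ℝ, (∀ s ∈ T, 0 ≤ ψ s) ∧ ∀ y, ∀ x ∈ N.toAddSubmonoid.bounded e,
      N.toAddSubmonoid.state e (y * x) = ψ y * N.toAddSubmonoid.state e x := by
  have heb := self_mem_bounded he
  let ψ : A →+* ℝ :=
    { toFun := fun y => N.toAddSubmonoid.state e (y * e)
      map_one' := by simp only [one_mul]; exact state_self he hne
      map_mul' := fun y z => by
        simp only [mul_assoc]; exact state_mul hT he hne htot y (N.mul_mem_bounded hT he z heb)
      map_zero' := by simp only [zero_mul]; exact state_zero he hne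
      map_add' := fun y z => by
        simp only [add_mul]
        exact state_add he hne htot (N.mul_mem_bounded hT he y heb)
          (N.mul_mem_bounded hT he z heb) }
  exact ⟨ψ, fun s hs => state_nonneg he hne (N.mul_mem_bounded hT he s heb)
    (N.mul_mem_of_mem_subsemiring hs he), fun y _ hx => state_mul hT he hne htot y hx⟩

theorem apply_eq_mul_state (he : e ∈ N) (hne : -e ∉ N) {ψ : A →+* ℝ}
    (hψ : ∀ y, ∀ x ∈ N.toAddSubmonoid.bounded e,
      N.toAddSubmonoid.state e (y * x) = ψ y * N.toAddSubmonoid.state e x)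
    {x : A} (hx : x ∈ N.toAddSubmonoid.bounded e) : ψ x = ψ e * N.toAddSubmonoid.state e x := by
  have := hψ x e (self_mem_bounded he)
  rwa [state_self he hne, mul_one, mul_comm, hψ e x hx, eq_comm] at this

theorem state_sum_mul_pos (hT : T.IsArchimedean) {ι : Type*} [Fintype ι]
    {t : ι → A} (ht : ∀ i, t i ∈ N) (hne : -∑ i, t i ∉ N)
    (htot : ∀ x ∈ N.toAddSubmonoid.bounded (∑ i, t i), x ∈ N ∨ -x ∈ N) {ψ : A →+* ℝ}
    (hψ : ∀ y, ∀ x ∈ N.toAddSubmonoid.bounded (∑ i, t i),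
      N.toAddSubmonoid.state (∑ i, t i) (y * x) = ψ y * N.toAddSubmonoid.state (∑ i, t i) x)
    {b : ι → A} (hb : ∀ i, 0 < ψ (b i)) :
    0 < N.toAddSubmonoid.state (∑ i, t i) (∑ i, b i * t i) := by
  set e := ∑ i, t i
  set C := N.toAddSubmonoid
  have he : e ∈ N := N.sum_mem fun i _ => ht i
  have htb : ∀ i, t i ∈ C.bounded e := fun i => mem_bounded_sum (fun i _ => ht i) (mem_univ i)
  have hsum : ∑ i, C.state e (t i) = 1 := by
    rw [← state_sum he hne htot _ fun i _ => htb i, state_self he hne]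
  obtain ⟨i, -, hi⟩ := exists_lt_of_sum_lt (s := univ) (f := fun _ => (0 : ℝ))
    (g := fun i => C.state e (t i)) (by simp [hsum])
  rw [state_sum he hne htot _ fun i _ => N.mul_mem_bounded hT he _ (htb i)]
  refine sum_pos' (fun j _ => ?_) ⟨i, mem_univ i, ?_⟩
  · rw [hψ _ _ (htb j)]
    exact mul_nonneg (hb j).le (state_nonneg he hne (htb j) (ht j))
  · rw [hψ _ _ (htb i)]
    exact mul_pos (hb i) hi

end State

end Submodule

theorem membership_criterion (A : Type*) [CommRing A] (T : Set A)
    (h0 : (0 : A) ∈ T) (h1 : (1 : A) ∈ T)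
    (hadd : ∀ x ∈ T, ∀ y ∈ T, x + y ∈ T)
    (hmul : ∀ x ∈ T, ∀ y ∈ T, x * y ∈ T)
    (harch : ∀ a : A, ∃ n : ℤ, ∃ t ∈ T, a = (n : A) + t)
    (hdiv : ∃ r : ℕ, 2 ≤ r ∧ ∃ u : A, (r : A) * u = 1 ∧ u ∈ T)
    (a : A)
    (hnn : ∀ φ : A →+* ℝ, (∀ t ∈ T, 0 ≤ φ t) → 0 ≤ φ a)
    (m : ℕ) (b t : Fin m → A) (ht : ∀ i, t i ∈ T)
    (hid : a = ∑ i, b i * t i)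
    (hbpos : ∀ φ : A →+* ℝ, (∀ s ∈ T, 0 ≤ φ s) → φ a = 0 → ∀ i, 0 < φ (b i)) :
    a ∈ T := by
  obtain ⟨r, hr, u, hru, hu⟩ := hdiv
  let S : Subsemiring A :=
    { carrier := T, zero_mem' := h0, one_mem' := h1
      add_mem' := fun hx hy => hadd _ hx _ hy, mul_mem' := fun hx hy => hmul _ hx _ hy }
  have hS : S.IsArchimedean := harch
  set M := Submodule.span S (Set.range t)
  set e := ∑ i, t i
  have htM : ∀ i, t i ∈ M := fun i => Submodule.subset_span ⟨i, rfl⟩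
  have heM : e ∈ M := M.sum_mem fun i _ => htM i
  have haM : a ∈ M.toAddSubmonoid.bounded e := hid ▸ (AddSubgroup.sum_mem _ fun i _ =>
    M.mul_mem_bounded hS heM (b i) (AddSubmonoid.mem_bounded_sum (fun i _ => htM i) (mem_univ i)))
  by_contra haT
  obtain ⟨N, hMN, haN, hmax⟩ := Submodule.exists_maximal_of_notMem hS hr hru hu heM haM
    fun h => haT (S.mem_of_mem_span (Set.range_subset_iff.2 ht) h)
  have he : e ∈ N := hMN heM
  have htot := fun x (hx : x ∈ N.toAddSubmonoid.bounded e) =>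
    Submodule.mem_or_neg_mem_of_maximal hmax he hx
  obtain ⟨ψ, hψT, hψ⟩ := Submodule.exists_ringHom_state_mul hS he hmax.1 htot
  have ha : a ∈ N.toAddSubmonoid.bounded e := AddSubmonoid.bounded_mono hMN haM
  have hφa := AddSubmonoid.state_nonpos_of_neg_mem he hmax.1 htot ha haN
  have hψa : ψ a = 0 := by
    refine le_antisymm ?_ (hnn ψ hψT)
    rw [Submodule.apply_eq_mul_state he hmax.1 hψ ha]
    exact mul_nonpos_of_nonneg_of_nonpos (hψT e (S.sum_mem fun i _ => ht i)) hφa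
  have := Submodule.state_sum_mul_pos hS (fun i => hMN (htM i)) hmax.1 htot hψ
    (hbpos ψ hψT hψa)
  rw [← hid] at this
  linarith
end

section
/- Let A be a commutative ring and T an archimedean semiring of A. Then the space S(T) of all ring homomorphisms φ : A → ℝ with φ(T) ⊆ [0,∞), with the topology induced from the product topology on ℝ^A, is compact (quasi-compact and Hausdorff). -/
theorem sT_compact (A : Type*) [CommRing A] (T : Set A)
    (h0 : (0 : A) ∈ T) (h1 : (1 : A) ∈ T)
    (hadd : ∀ x ∈ T, ∀ y ∈ T, x + y ∈ T)
    (hmul : ∀ x ∈ T, ∀ y ∈ T, x * y ∈ T)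
    (harch : ∀ a : A, ∃ n : ℤ, ∃ t ∈ T, a = (n : A) + t) :
    IsCompact {f : A → ℝ | ∃ φ : A →+* ℝ, ⇑φ = f ∧ ∀ t ∈ T, 0 ≤ f t} := by
  classical
  choose n t ht heq using harch
  have hKc : IsCompact (Set.pi Set.univ fun a : A =>
      Set.Icc ((n a : ℝ)) (-(n (-a) : ℝ))) :=
    isCompact_univ_pi fun a => isCompact_Icc
  apply IsCompact.of_isClosed_subset hKc
  · have hset : {f : A → ℝ | ∃ φ : A →+* ℝ, ⇑φ = f ∧ ∀ t ∈ T, 0 ≤ f t}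
        = {f : A → ℝ | f 1 = 1} ∩ ({f | ∀ x y : A, f (x * y) = f x * f y}
          ∩ ({f | ∀ x y : A, f (x + y) = f x + f y} ∩ {f | ∀ s ∈ T, 0 ≤ f s})) := by
      ext f
      constructor
      · rintro ⟨φ, rfl, hp⟩
        exact ⟨map_one φ, fun x y => map_mul φ x y, fun x y => map_add φ x y, hp⟩
      · rintro ⟨hone, hmul', hadd', hp⟩
        exact ⟨RingHom.mk' ⟨⟨f, hone⟩, hmul'⟩ hadd', rfl, hp⟩
    rw [hset]
    refine IsClosed.inter (isClosed_eq (continuous_apply 1) continuous_const)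
      (IsClosed.inter ?_ (IsClosed.inter ?_ ?_))
    · simp only [Set.setOf_forall]
      exact isClosed_iInter fun x => isClosed_iInter fun y =>
        isClosed_eq (continuous_apply _) ((continuous_apply x).mul (continuous_apply y))
    · simp only [Set.setOf_forall]
      exact isClosed_iInter fun x => isClosed_iInter fun y =>
        isClosed_eq (continuous_apply _) ((continuous_apply x).add (continuous_apply y))
    · simp only [Set.setOf_forall]
      exact isClosed_iInter fun s => isClosed_iInter fun _ =>
        isClosed_le continuous_const (continuous_apply s)
  · rintro f ⟨φ, rfl, hp⟩ a _
    have h1' : φ a = (n a : ℝ) + φ (t a) := by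
      conv_lhs => rw [heq a]
      rw [map_add, map_intCast]
    have h2' : φ (-a) = (n (-a) : ℝ) + φ (t (-a)) := by
      conv_lhs => rw [heq (-a)]
      rw [map_add, map_intCast]
    have hle : (n a : ℝ) ≤ φ a := by
      rw [h1']; linarith [hp (t a) (ht a)]
    have hge : φ a ≤ -(n (-a) : ℝ) := by
      have := hp (t (-a)) (ht (-a))
      have hneg : φ (-a) = -φ a := map_neg φ a
      rw [hneg] at h2'
      linarith
    exact ⟨hle, hge⟩
end

section
/- Let A = ℝ[X] and let T be the semiring of A generated by [0,∞) and the three polynomials 1+X, 1−X, and X²+X⁴. Then X² ∉ T, even though X² and 1+X² are nonnegative on S(T), 1 ∈ A·X² + A·(1+X²), and X²(1+X²) ∈ T. -/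
open Polynomial

noncomputable def goodSet : Subsemiring ℝ[X] where
  carrier := {p | 0 ≤ p.eval 0 ∧ (p.eval 0 = 0 → (X ^ 2 + X ^ 4 : ℝ[X]) ∣ p)}
  mul_mem' := by
    rintro p q ⟨hp0, hpd⟩ ⟨hq0, hqd⟩
    refine ⟨by simpa using mul_nonneg hp0 hq0, ?_⟩
    intro h
    simp only [eval_mul] at h
    rcases mul_eq_zero.mp h with h | h
    · exact (hpd h).mul_right q
    · exact (hqd h).mul_left p
  one_mem' := by simp
  add_mem' := by
    rintro p q ⟨hp0, hpd⟩ ⟨hq0, hqd⟩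
    refine ⟨by simpa using add_nonneg hp0 hq0, ?_⟩
    intro h
    simp only [eval_add] at h
    have h1 : p.eval 0 = 0 := le_antisymm (by linarith) hp0
    have h2 : q.eval 0 = 0 := by linarith
    exact dvd_add (hpd h1) (hqd h2)
  zero_mem' := by simp

theorem counterexample_semiring (T : Set ℝ[X])
    (hT : T = (Subsemiring.closure
      ((Polynomial.C '' {r : ℝ | 0 ≤ r}) ∪
        {1 + X, 1 - X, X ^ 2 + X ^ 4}) : Subsemiring ℝ[X])) :
    (X ^ 2 : ℝ[X]) ∉ T ∧
    (∀ φ : ℝ[X] →+* ℝ, (∀ t ∈ T, 0 ≤ φ t) → 0 ≤ φ (X ^ 2) ∧ 0 ≤ φ (1 + X ^ 2)) ∧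
    (∃ u v : ℝ[X], 1 = u * X ^ 2 + v * (1 + X ^ 2)) ∧
    (X ^ 2 : ℝ[X]) * (1 + X ^ 2) ∈ T := by
  subst hT
  refine ⟨?_, ?_, ⟨-1, 1, by ring⟩, ?_⟩
  · intro hX2
    have hgen : ((Polynomial.C '' {r : ℝ | 0 ≤ r}) ∪
        {1 + X, 1 - X, X ^ 2 + X ^ 4} : Set ℝ[X]) ⊆ (goodSet : Set ℝ[X]) := by
      rintro p (⟨r, hr, rfl⟩ | hp)
      · refine ⟨by simpa using hr, fun h => ?_⟩
        simp only [eval_C] at h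
        simp [h]
      · rcases hp with rfl | rfl | rfl
        · exact ⟨by simp, fun h => by simp at h⟩
        · exact ⟨by simp, fun h => by simp at h⟩
        · exact ⟨by simp, fun _ => dvd_refl _⟩
    have hmem : (X ^ 2 : ℝ[X]) ∈ goodSet :=
      Subsemiring.closure_le.mpr hgen hX2
    have hdvd : (X ^ 2 + X ^ 4 : ℝ[X]) ∣ X ^ 2 := hmem.2 (by simp)
    have hne : (X ^ 2 : ℝ[X]) ≠ 0 := by
      intro h
      simpa using congrArg (fun p => Polynomial.eval 1 p) h
    have hle := Polynomial.natDegree_le_of_dvd hdvd hne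
    have h4 : (X ^ 2 + X ^ 4 : ℝ[X]).natDegree = 4 := by
      compute_degree!
    rw [h4, Polynomial.natDegree_X_pow] at hle
    omega
  · intro φ _
    constructor
    · rw [map_pow]
      positivity
    · rw [map_add, map_one, map_pow]
      positivity
  · have h : (X ^ 2 : ℝ[X]) * (1 + X ^ 2) = X ^ 2 + X ^ 4 := by ring
    rw [h]
    exact Subsemiring.subset_closure (by simp)
end

section
/- For nonzero polynomials p, q ∈ ℝ[X₁,…,Xₙ], the Newton polytope of pq equals the Minkowski sum of the Newton polytopes of p and q: New(pq) = New(p) + New(q). -/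
/-!
Every extreme point `v` of `New(p) + New(q)` splits as `v = α + β` with `α`, `β` extreme points
of `New(p)`, `New(q)`, hence exponents of `p` and `q`, and this is the only way to write `v` as a
sum of a point of `New(p)` and a point of `New(q)`. So the monomial `X^(α + β)` arises exactly
once in `p * q`, with the nonzero coefficient `p_α q_β`. Thus all extreme points of the compact
convex set `New(p) + New(q)` lie in `New(pq)`, and Krein–Milman gives `New(p) + New(q) ⊆ New(pq)`.
The other inclusion holds because every exponent of `p * q` is a sum of exponents of `p` and `q`.
-/

open Set Pointwise

section ExtremePointsAdd

variable {𝕜 E : Type*} [Field 𝕜] [LinearOrder 𝕜] [IsStrictOrderedRing 𝕜]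
  [AddCommGroup E] [Module 𝕜 E] {A B : Set E} {a a' b b' : E}

theorem eq_of_add_eq_of_add_mem_extremePoints_add (ha : a ∈ A) (hb : b ∈ B) (ha' : a' ∈ A)
    (hb' : b' ∈ B) (hext : a + b ∈ (A + B).extremePoints 𝕜) (h : a' + b' = a + b) :
    a' = a ∧ b' = b := by
  have hmid : a + b ∈ openSegment 𝕜 (a + b') (a' + b) := by
    refine ⟨1 / 2, 1 / 2, by norm_num, by norm_num, by norm_num, ?_⟩
    rw [← smul_add, show a + b' + (a' + b) = (a + b) + (a' + b') by abel, h, ← two_smul 𝕜,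
      smul_smul]
    norm_num
  have hb'b : b' = b :=
    add_left_cancel ((mem_extremePoints.mp hext).2 _ (add_mem_add ha hb') _ (add_mem_add ha' hb)
      hmid).1
  exact ⟨add_right_cancel (hb'b ▸ h), hb'b⟩

theorem mem_extremePoints_left_of_add_mem_extremePoints_add (ha : a ∈ A) (hb : b ∈ B)
    (hext : a + b ∈ (A + B).extremePoints 𝕜) : a ∈ A.extremePoints 𝕜 := by
  refine ⟨ha, fun a₁ ha₁ a₂ ha₂ hseg ↦ ?_⟩
  rw [← mem_openSegment_translate 𝕜 b, add_comm b a, add_comm b a₁, add_comm b a₂] at hseg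
  exact add_right_cancel (hext.2 (add_mem_add ha₁ hb) (add_mem_add ha₂ hb) hseg)

theorem mem_extremePoints_right_of_add_mem_extremePoints_add (ha : a ∈ A) (hb : b ∈ B)
    (hext : a + b ∈ (A + B).extremePoints 𝕜) : b ∈ B.extremePoints 𝕜 := by
  rw [add_comm A, add_comm a] at hext
  exact mem_extremePoints_left_of_add_mem_extremePoints_add hb ha hext

end ExtremePointsAdd

theorem IsCompact.subset_of_extremePoints_subset {E : Type*} [AddCommGroup E] [Module ℝ E]
    [TopologicalSpace E] [T2Space E] [IsTopologicalAddGroup E] [ContinuousSMul ℝ E]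
    [LocallyConvexSpace ℝ E] {K C : Set E} (hK : IsCompact K) (hKconv : Convex ℝ K)
    (hC : IsClosed C) (hCconv : Convex ℝ C) (h : K.extremePoints ℝ ⊆ C) : K ⊆ C := by
  rw [← closure_convexHull_extremePoints hK hKconv]
  exact closure_minimal (convexHull_min h hCconv) hC

namespace MvPolynomial

variable {σ R : Type*}

def expToReal : (σ →₀ ℕ) →+ (σ → ℝ) where
  toFun α i := α i
  map_zero' := by ext; simp
  map_add' α β := by ext; simp

theorem expToReal_injective : Function.Injective (expToReal : (σ →₀ ℕ) → σ → ℝ) :=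
  fun _ _ h ↦ Finsupp.ext fun i ↦ Nat.cast_injective (congrFun h i)

variable [CommSemiring R]

def newtonPolytope (p : MvPolynomial σ R) : Set (σ → ℝ) :=
  convexHull ℝ (expToReal '' (p.support : Set (σ →₀ ℕ)))

theorem isCompact_newtonPolytope (p : MvPolynomial σ R) : IsCompact (newtonPolytope p) :=
  (p.support.finite_toSet.image _).isCompact_convexHull ℝ

theorem convex_newtonPolytope (p : MvPolynomial σ R) : Convex ℝ (newtonPolytope p) :=
  convex_convexHull ℝ _

theorem newtonPolytope_mul_subset (p q : MvPolynomial σ R) :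
    newtonPolytope (p * q) ⊆ newtonPolytope p + newtonPolytope q := by
  classical
  calc newtonPolytope (p * q)
      ⊆ convexHull ℝ (expToReal '' ↑(p.support + q.support)) :=
        convexHull_mono (image_mono (Finset.coe_subset.mpr (support_mul p q)))
    _ = newtonPolytope p + newtonPolytope q := by
        rw [Finset.coe_add, image_add, convexHull_add]
        rfl

theorem extremePoints_add_newtonPolytope_subset [NoZeroDivisors R] (p q : MvPolynomial σ R) :
    (newtonPolytope p + newtonPolytope q).extremePoints ℝ
      ⊆ expToReal '' ((p * q).support : Set (σ →₀ ℕ)) := by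
  rintro _ hv
  obtain ⟨a, ha, b, hb, rfl⟩ := hv.1
  obtain ⟨α, hα, rfl⟩ :=
    extremePoints_convexHull_subset (mem_extremePoints_left_of_add_mem_extremePoints_add ha hb hv)
  obtain ⟨β, hβ, rfl⟩ :=
    extremePoints_convexHull_subset (mem_extremePoints_right_of_add_mem_extremePoints_add ha hb hv)
  have hunique : UniqueAdd p.support q.support α β := fun α' β' hα' hβ' h ↦ by
    obtain ⟨h₁, h₂⟩ := eq_of_add_eq_of_add_mem_extremePoints_add ha hb
      (subset_convexHull ℝ _ ⟨α', hα', rfl⟩) (subset_convexHull ℝ _ ⟨β', hβ', rfl⟩) hv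
      (by rw [← map_add, h, map_add])
    exact ⟨expToReal_injective h₁, expToReal_injective h₂⟩
  refine ⟨α + β, ?_, map_add _ _ _⟩
  exact mem_support_iff.mpr <| (AddMonoidAlgebra.coeff_mul_add_of_uniqueAdd hunique).trans_ne <|
    mul_ne_zero (mem_support_iff.mp hα) (mem_support_iff.mp hβ)

end MvPolynomial

open MvPolynomial Pointwise

theorem newton_polytope_mul_general (n : ℕ) (p q : MvPolynomial (Fin n) ℝ) :
    convexHull ℝ ((fun α : Fin n →₀ ℕ => fun i => (α i : ℝ)) '' ((p * q).support : Set (Fin n →₀ ℕ)))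
      = convexHull ℝ ((fun α : Fin n →₀ ℕ => fun i => (α i : ℝ)) '' (p.support : Set (Fin n →₀ ℕ)))
        + convexHull ℝ ((fun α : Fin n →₀ ℕ => fun i => (α i : ℝ)) '' (q.support : Set (Fin n →₀ ℕ))) := by
  show newtonPolytope (p * q) = newtonPolytope p + newtonPolytope q
  have hcompact := (isCompact_newtonPolytope p).add (isCompact_newtonPolytope q)
  have hconvex := (convex_newtonPolytope p).add (convex_newtonPolytope q)
  refine (newtonPolytope_mul_subset p q).antisymm <| hcompact.subset_of_extremePoints_subset hconvex
    (isCompact_newtonPolytope _).isClosed (convex_newtonPolytope _) ?_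
  exact (extremePoints_add_newtonPolytope_subset p q).trans (subset_convexHull ℝ _)

theorem newton_polytope_mul (n : ℕ) (p q : MvPolynomial (Fin n) ℝ)
    (hp : p ≠ 0) (hq : q ≠ 0) :
    convexHull ℝ ((fun α : Fin n →₀ ℕ => fun i => (α i : ℝ)) '' ((p * q).support : Set (Fin n →₀ ℕ)))
      = convexHull ℝ ((fun α : Fin n →₀ ℕ => fun i => (α i : ℝ)) '' (p.support : Set (Fin n →₀ ℕ)))
        + convexHull ℝ ((fun α : Fin n →₀ ℕ => fun i => (α i : ℝ)) '' (q.support : Set (Fin n →₀ ℕ))) :=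
  newton_polytope_mul_general n p q
end
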